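/- arXiv:2503.18144 — 3 statements merged into one kernel-verified Lean document; each statement's English description precedes it below -/
import Mathlib

section
/- Let 𝓡 be a symmetric domain (if some R ∈ 𝓡 has h_1 P h_2 then some R' ∈ 𝓡 has h_2 P' h_1) that is not contained in any objective indifferences domain. Then there exist a preference profile R ∈ 𝓡^n, a tie-breaking profile ≻, a coalition Q, and a misreport R' ∈ 𝓡^n differing only on Q, such that every member of Q weakly prefers TTC_≻(R') to TTC_≻(R) and at least one member strictly prefers it. Hence no TTC_≻ mechanism is group strategy-proof on 𝓡, and objective indifferences domains are exactly the symmetric-maximal domains for group strategy-proofness of TTC_≻ mechanisms. -/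
open scoped Classical

namespace ShapleyScarf

/-- A weak preference relation: complete (total) and transitive, hence reflexive. -/
structure WeakOrder (H : Type*) where
  rel : H → H → Prop
  total : ∀ a b, rel a b ∨ rel b a
  trans : ∀ a b c, rel a b → rel b c → rel a c

namespace WeakOrder
variable {H : Type*}
/-- Strict part `P` of a weak preference. -/
def P (R : WeakOrder H) (a b : H) : Prop := R.rel a b ∧ ¬ R.rel b a
/-- Indifference part `I` of a weak preference. -/
def I (R : WeakOrder H) (a b : H) : Prop := R.rel a b ∧ R.rel b a
end WeakOrder

/-- `lt` is a strict linear order on agents (a tie-breaking order). -/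
def IsTieBreak {n : ℕ} (lt : Fin n → Fin n → Prop) : Prop :=
  (∀ a b, a ≠ b → lt a b ∨ lt b a) ∧ Transitive lt ∧ ∀ a, ¬ lt a a

section Defs
variable {n : ℕ} {H : Type*} {B : Type*}

/-- Strict part of the tie-broken preference `P_{i,≻}`: `a` above `b` iff
`a P b`, or `a I b` and the owner of `a` comes before the owner of `b` in `≻_i`. -/
def tieBroken (w : Fin n ≃ H) (R : WeakOrder H) (lt : Fin n → Fin n → Prop) (a b : H) : Prop :=
  R.P a b ∨ (R.I a b ∧ lt (w.symm a) (w.symm b))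

/-- The weak tie-broken relation `R_{i,≻}` (reflexive closure of the strict part). -/
def tieBrokenWeak (w : Fin n ≃ H) (R : WeakOrder H) (lt : Fin n → Fin n → Prop)
    (a b : H) : Prop :=
  a = b ∨ tieBroken w R lt a b

/-- The owner (in `S`) of the `pref`-best house among the endowments of the
remaining agents `S`; the agent with this endowment is whom `i` points at. -/
noncomputable def point (w : Fin n ≃ H) (pref : H → H → Prop) (S : Finset (Fin n))
    (i : Fin n) : Fin n :=
  if h : (S.filter fun m => ∀ j ∈ S, j = m ∨ pref (w m) (w j)).Nonempty then
    (S.filter fun m => ∀ j ∈ S, j = m ∨ pref (w m) (w j)).min' h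
  else i

/-- The agents of `S` lying on some trading cycle of the pointing map. -/
noncomputable def cycleAgents (w : Fin n ≃ H) (pref : Fin n → H → H → Prop)
    (S : Finset (Fin n)) : Finset (Fin n) :=
  S.filter fun i => ∃ k, 0 < k ∧ (fun j => point w (pref j) S j)^[k] i = i

/-- Top trading cycles on strict preferences, fuel-based recursion: in each round all
current trading cycles are executed and their agents removed. -/
noncomputable def TTCaux (w : Fin n ≃ H) (pref : Fin n → H → H → Prop) :
    ℕ → Finset (Fin n) → Fin n → H
  | 0, _, i => w i
  | fuel + 1, S, i =>
      if i ∈ cycleAgents w pref S then w (point w (pref i) S i)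
      else TTCaux w pref fuel (S \ cycleAgents w pref S) i

/-- Gale's top trading cycles algorithm for a strict preference profile. -/
noncomputable def TTCstrict (w : Fin n ≃ H) (pref : Fin n → H → H → Prop) : Fin n → H :=
  TTCaux w pref n Finset.univ

/-- Round (executed-cycle index, starting from 1) at which an agent is assigned. -/
noncomputable def TTCroundAux (w : Fin n ≃ H) (pref : Fin n → H → H → Prop) :
    ℕ → Finset (Fin n) → Fin n → ℕ
  | 0, _, _ => 1
  | fuel + 1, S, i =>
      if i ∈ cycleAgents w pref S then 1
      else TTCroundAux w pref fuel (S \ cycleAgents w pref S) i + 1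

/-- TTC with fixed tie-breaking: `TTC_≻(R) = TTC(R_≻)`. -/
noncomputable def TTCtb (w : Fin n ≃ H) (R : Fin n → WeakOrder H)
    (tb : Fin n → Fin n → Fin n → Prop) : Fin n → H :=
  TTCstrict w fun i => tieBroken w (R i) (tb i)

/-- The round in which agent `i` is assigned under `TTC_≻(R)`. -/
noncomputable def TTCtbRound (w : Fin n ≃ H) (R : Fin n → WeakOrder H)
    (tb : Fin n → Fin n → Fin n → Prop) (i : Fin n) : ℕ :=
  TTCroundAux w (fun a => tieBroken w (R a) (tb a)) n Finset.univ i

/-- Objective indifferences w.r.t. the partition of `H` into the fibers of `blk`: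
indifference holds exactly between houses in the same block. -/
def ObjInd (blk : H → B) (R : WeakOrder H) : Prop :=
  ∀ a b, R.I a b ↔ blk a = blk b

/-- `x` is blocked: some coalition `Q` can reallocate its own endowments making
all its members weakly better off and one strictly better off. -/
def Blocks (w : Fin n ≃ H) (R : Fin n → WeakOrder H) (x : Fin n → H) : Prop :=
  ∃ (Q : Finset (Fin n)) (y : Fin n ≃ H),
    Q.image (⇑y) = Q.image (⇑w) ∧
    (∀ i ∈ Q, (R i).rel (y i) (x i)) ∧
    ∃ i ∈ Q, (R i).P (y i) (x i)

/-- `x` is weakly blocked: some nonempty coalition can reallocate its own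
endowments making all of its members strictly better off. -/
def WeaklyBlocks (w : Fin n ≃ H) (R : Fin n → WeakOrder H) (x : Fin n → H) : Prop :=
  ∃ Q : Finset (Fin n), Q.Nonempty ∧ ∃ y : Fin n ≃ H,
    Q.image (⇑y) = Q.image (⇑w) ∧ ∀ i ∈ Q, (R i).P (y i) (x i)

/-- `y` Pareto dominates `x`. -/
def ParetoDom (R : Fin n → WeakOrder H) (y x : Fin n → H) : Prop :=
  (∀ i, (R i).rel (y i) (x i)) ∧ ∃ i, (R i).P (y i) (x i)

end Defs
section Aux
variable {n : ℕ} {H : Type*}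

namespace WeakOrder
variable {H : Type*} (R : WeakOrder H)

theorem rel_refl (a : H) : R.rel a a := (R.total a a).elim id id

theorem rel_of_not_rel {a b : H} (h : ¬ R.rel a b) : R.rel b a :=
  (R.total a b).resolve_left h

theorem P_trans_rel {a b c : H} (h : R.P a b) (h' : R.rel b c) : R.P a c :=
  ⟨R.trans _ _ _ h.1 h', fun hc => h.2 (R.trans _ _ _ h' hc)⟩

theorem rel_trans_P {a b c : H} (h : R.rel a b) (h' : R.P b c) : R.P a c :=
  ⟨R.trans _ _ _ h h'.1, fun hc => h'.2 (R.trans _ _ _ hc h)⟩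

theorem P_of_not_rel {a b : H} (h : ¬ R.rel b a) : R.P a b :=
  ⟨R.rel_of_not_rel h, h⟩

end WeakOrder

variable (w : Fin n ≃ H)

theorem tieBroken_rel {R : WeakOrder H} {lt : Fin n → Fin n → Prop} {a b : H}
    (h : tieBroken w R lt a b) : R.rel a b := by
  rcases h with h | h
  · exact h.1
  · exact h.1.1

theorem tieBroken_P_agents {R : WeakOrder H} {lt : Fin n → Fin n → Prop} {a b : Fin n}
    (h : tieBroken w R lt (w a) (w b)) (hlt : ¬ lt a b) : R.P (w a) (w b) := by
  rcases h with h | h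
  · exact h
  · exact absurd (by simpa using h.2) hlt

theorem tieBroken_total {R : WeakOrder H} {lt : Fin n → Fin n → Prop}
    (hlt : IsTieBreak lt) {a b : H} (hab : a ≠ b) :
    tieBroken w R lt a b ∨ tieBroken w R lt b a := by
  have hs : (w.symm a : Fin n) ≠ w.symm b := fun e => hab (by
    have := congrArg w e; simpa using this)
  by_cases h1 : R.rel a b <;> by_cases h2 : R.rel b a
  · rcases hlt.1 _ _ hs with hl | hl
    · exact Or.inl (Or.inr ⟨⟨h1, h2⟩, hl⟩)
    · exact Or.inr (Or.inr ⟨⟨h2, h1⟩, hl⟩)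
  · exact Or.inl (Or.inl ⟨h1, h2⟩)
  · exact Or.inr (Or.inl ⟨h2, h1⟩)
  · exact absurd ((R.total a b).resolve_left h1) h2

theorem tieBroken_trans {R : WeakOrder H} {lt : Fin n → Fin n → Prop}
    (hlt : IsTieBreak lt) {a b c : H}
    (h : tieBroken w R lt a b) (h' : tieBroken w R lt b c) : tieBroken w R lt a c := by
  rcases h with h | h <;> rcases h' with h' | h'
  · exact Or.inl (R.P_trans_rel h h'.1)
  · exact Or.inl (R.P_trans_rel h h'.1.1)
  · exact Or.inl (R.rel_trans_P h.1.1 h')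
  · exact Or.inr ⟨⟨R.trans _ _ _ h.1.1 h'.1.1, R.trans _ _ _ h'.1.2 h.1.2⟩,
      hlt.2.1 h.2 h'.2⟩

theorem tieBroken_irrefl {R : WeakOrder H} {lt : Fin n → Fin n → Prop}
    (hlt : IsTieBreak lt) (a : H) : ¬ tieBroken w R lt a a := by
  rintro (⟨hr, hn⟩ | ⟨_, hl⟩)
  · exact hn hr
  · exact hlt.2.2 _ hl

theorem exists_dominant (p : H → H → Prop)
    (htot : ∀ a b : H, a ≠ b → p a b ∨ p b a)
    (htr : ∀ a b c : H, p a b → p b c → p a c) (S : Finset (Fin n)) :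
    S.Nonempty → ∃ m ∈ S, ∀ j ∈ S, j = m ∨ p (w m) (w j) := by
  induction S using Finset.induction_on with
  | empty => rintro ⟨x, hx⟩; simp at hx
  | @insert a S ha IH =>
    intro _
    rcases S.eq_empty_or_nonempty with rfl | hS
    · exact ⟨a, by simp, by intro j hj; simp at hj; exact Or.inl hj⟩
    · obtain ⟨m, hm, hdom⟩ := IH hS
      have ham : a ≠ m := fun e => ha (e ▸ hm)
      have hwam : (w a : H) ≠ w m := fun e => ham (w.injective e)
      rcases htot _ _ hwam with hp | hp
      · refine ⟨a, by simp, ?_⟩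
        intro j hj
        rcases Finset.mem_insert.1 hj with rfl | hj
        · exact Or.inl rfl
        · rcases hdom j hj with rfl | hd
          · exact Or.inr hp
          · exact Or.inr (htr _ _ _ hp hd)
      · refine ⟨m, Finset.mem_insert_of_mem hm, ?_⟩
        intro j hj
        rcases Finset.mem_insert.1 hj with rfl | hj
        · exact Or.inr hp
        · exact hdom j hj

theorem point_mem {p : H → H → Prop} {S : Finset (Fin n)} {i : Fin n} (hi : i ∈ S) :
    point w p S i ∈ S := by
  unfold point
  split
  · exact Finset.mem_of_mem_filter _ (Finset.min'_mem _ _)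
  · exact hi

theorem pointDom (R : WeakOrder H) {lt : Fin n → Fin n → Prop} (hlt : IsTieBreak lt)
    {S : Finset (Fin n)} {v : Fin n} (hv : v ∈ S) :
    ∀ j ∈ S, j = point w (tieBroken w R lt) S v ∨
      tieBroken w R lt (w (point w (tieBroken w R lt) S v)) (w j) := by
  obtain ⟨m, hm, hdom⟩ := exists_dominant w (tieBroken w R lt)
    (fun a b hab => tieBroken_total w hlt hab)
    (fun a b c h h' => tieBroken_trans w hlt h h') S ⟨v, hv⟩
  have hne : (S.filter fun m => ∀ j ∈ S, j = m ∨ tieBroken w R lt (w m) (w j)).Nonempty :=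
    ⟨m, Finset.mem_filter.2 ⟨hm, hdom⟩⟩
  have hmem := Finset.min'_mem _ hne
  rw [Finset.mem_filter] at hmem
  unfold point
  rw [dif_pos hne]
  exact hmem.2

theorem iterate_ne_of_min {f : Fin n → Fin n} {i : Fin n} {k : ℕ}
    (hfk : f^[k] i = i) (hmin : ∀ m, 0 < m → m < k → f^[m] i ≠ i)
    {a b : ℕ} (hab : a < b) (hbk : b < k) : f^[a] i ≠ f^[b] i := by
  intro he
  have h1 : f^[k - b + b] i = i := by rwa [Nat.sub_add_cancel hbk.le]
  rw [Function.iterate_add_apply] at h1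
  have h2 : f^[k - b + a] i = i := by
    rw [Function.iterate_add_apply, he]; exact h1
  exact hmin _ (by omega) (by omega) h2
/-! ### Tie-breaking orders from ranks -/

def rkOrd {n : ℕ} (r : Fin n → ℕ) : Fin n → Fin n → Prop := fun a b => r a < r b

theorem isTieBreak_rkOrd {n : ℕ} {r : Fin n → ℕ}
    (hinj : ∀ a b, a ≠ b → r a ≠ r b) : IsTieBreak (rkOrd r) := by
  refine ⟨fun a b hab => ?_, fun a b c h h' => lt_trans h h', fun a => lt_irrefl _⟩
  rcases lt_or_ge (r a) (r b) with h | h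
  · exact Or.inl h
  · exact Or.inr (lt_of_le_of_ne h (Ne.symm (hinj a b hab)))

variable {n : ℕ}

/-- rank for the order (x, y, everyone else). -/
def rkS (x y : Fin n) : Fin n → ℕ := fun a => if a = x then 0 else if a = y then 1 else a.val + 2

/-- rank for a crowd member `v`: (v, other crowd, i1, i2). -/
def rkC (i1 i2 v : Fin n) : Fin n → ℕ := fun a =>
  if a = v then 0 else if a = i1 then n + 1 else if a = i2 then n + 2 else a.val + 1

theorem rkS_inj (x y : Fin n) : ∀ a b, a ≠ b → rkS x y a ≠ rkS x y b := by
  intro a b hab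
  unfold rkS
  split_ifs with h1 h2 h3 h4 h5 h6 h7 <;>
    first
      | omega
      | (exact fun e => hab (by subst h1; subst h3; rfl))
      | (exact fun e => hab (by subst h2; subst h5; rfl))
      | (exact fun e => hab (Fin.ext (by omega)))
  all_goals
    (try exact fun e => absurd (Fin.ext (by omega : a.val = b.val)) hab)

theorem rkC_inj (i1 i2 v : Fin n) : ∀ a b, a ≠ b → rkC i1 i2 v a ≠ rkC i1 i2 v b := by
  intro a b hab
  have hav : a.val < n := a.isLt
  have hbv : b.val < n := b.isLt
  unfold rkC
  split_ifs with h1 h2 h3 h4 h5 h6 h7 h8 h9 <;>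
    first
      | omega
      | (exact fun e => hab (by subst_vars; rfl))
      | (exact fun e => hab (Fin.ext (by omega)))

theorem isTieBreak_rkS (x y : Fin n) : IsTieBreak (rkOrd (rkS x y)) :=
  isTieBreak_rkOrd (rkS_inj x y)

theorem isTieBreak_rkC (i1 i2 v : Fin n) : IsTieBreak (rkOrd (rkC i1 i2 v)) :=
  isTieBreak_rkOrd (rkC_inj i1 i2 v)

-- F1 : nothing is before x in (x, y, rest)
theorem rkS_not_lt_fst (x y a : Fin n) : ¬ rkOrd (rkS x y) a x := by
  unfold rkOrd rkS; split_ifs <;> omega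

-- F2 : only x is before y in (x, y, rest)
theorem rkS_not_lt_snd (x y a : Fin n) (ha : a ≠ x) : ¬ rkOrd (rkS x y) a y := by
  unfold rkOrd rkS; split_ifs <;> first | omega | (exact absurd ‹a = x› ha)

-- F3 : nothing is before v in v's own order
theorem rkC_not_lt_self (i1 i2 v a : Fin n) : ¬ rkOrd (rkC i1 i2 v) a v := by
  unfold rkOrd rkC
  have : a.val < n := a.isLt
  split_ifs <;> omega

-- F4 : i2 is last in v's order (when v ≠ i2)
theorem rkC_i2_last (i1 i2 v a : Fin n) (hv : v ≠ i2) : ¬ rkOrd (rkC i1 i2 v) i2 a := by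
  unfold rkOrd rkC
  have : a.val < n := a.isLt
  split_ifs <;> first | omega | (exact absurd ‹i2 = v› (Ne.symm hv)) | skip
  all_goals omega
/-! ### The crowd preference assignment -/

section Crowd
variable {H : Type*} (Rα Rβ Rγ : WeakOrder H) (h1 h2 : H)

open Classical in
/-- Preference assigned to the owner of house `x`. -/
noncomputable def cPref (x : H) : WeakOrder H :=
  if Rα.rel x h1 ∧ Rα.rel x h2 then Rα
  else if Rβ.rel x h1 ∧ Rβ.rel x h2 then Rβ
  else if Rγ.rel x h1 ∧ Rγ.rel x h2 then Rγ
  else Rα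

/-- A house whose owner can never trade before the specials are done. -/
def IsStuck (x : H) : Prop :=
  ¬ (Rα.rel x h1 ∧ Rα.rel x h2) ∧ ¬ (Rβ.rel x h1 ∧ Rβ.rel x h2) ∧
    ¬ (Rγ.rel x h1 ∧ Rγ.rel x h2)

variable {Rα Rβ Rγ : WeakOrder H} {h1 h2 : H}

theorem stuck_props (hI : Rα.I h1 h2) (hP : Rβ.P h1 h2) (hPγ : Rγ.P h2 h1)
    {x : H} (hs : IsStuck Rα Rβ Rγ h1 h2 x) :
    Rα.P h1 x ∧ Rα.P h2 x ∧ Rβ.P h1 x ∧ Rγ.P h2 x := by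
  obtain ⟨hA, hB, hG⟩ := hs
  have hA1 : ¬ Rα.rel x h1 := by
    intro hr1
    rcases Classical.em (Rα.rel x h2) with hr2 | hr2
    · exact hA ⟨hr1, hr2⟩
    · exact hr2 (Rα.trans _ _ _ hr1 hI.1)
  have hPA1 : Rα.P h1 x := Rα.P_of_not_rel hA1
  have hPA2 : Rα.P h2 x := Rα.rel_trans_P hI.2 hPA1
  have hPB : Rβ.P h1 x := by
    rcases Classical.em (Rβ.rel x h1) with hr1 | hr1
    · rcases Classical.em (Rβ.rel x h2) with hr2 | hr2
      · exact absurd ⟨hr1, hr2⟩ hB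
      · exact absurd (Rβ.trans _ _ _ hr1 hP.1) hr2
    · exact Rβ.P_of_not_rel hr1
  have hPG : Rγ.P h2 x := by
    rcases Classical.em (Rγ.rel x h2) with hr2 | hr2
    · rcases Classical.em (Rγ.rel x h1) with hr1 | hr1
      · exact absurd ⟨hr1, hr2⟩ hG
      · exact absurd (Rγ.trans _ _ _ hr2 hPγ.1) hr1
    · exact Rγ.P_of_not_rel hr2
  exact ⟨hPA1, hPA2, hPB, hPG⟩

theorem cPref_cases (x : H) :
    (cPref Rα Rβ Rγ h1 h2 x = Rα ∧ Rα.rel x h1 ∧ Rα.rel x h2) ∨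
    (cPref Rα Rβ Rγ h1 h2 x = Rβ ∧ Rβ.rel x h1 ∧ Rβ.rel x h2) ∨
    (cPref Rα Rβ Rγ h1 h2 x = Rγ ∧ Rγ.rel x h1 ∧ Rγ.rel x h2) ∨
    (cPref Rα Rβ Rγ h1 h2 x = Rα ∧ IsStuck Rα Rβ Rγ h1 h2 x) := by
  unfold cPref IsStuck
  split_ifs with hA hB hG
  · exact Or.inl ⟨rfl, hA⟩
  · exact Or.inr (Or.inl ⟨rfl, hB⟩)
  · exact Or.inr (Or.inr (Or.inl ⟨rfl, hG⟩))
  · exact Or.inr (Or.inr (Or.inr ⟨rfl, hA, hB, hG⟩))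

theorem cPref_mem_triple (x : H) :
    cPref Rα Rβ Rγ h1 h2 x = Rα ∨ cPref Rα Rβ Rγ h1 h2 x = Rβ ∨
      cPref Rα Rβ Rγ h1 h2 x = Rγ := by
  unfold cPref; split_ifs <;> simp

end Crowd
/-! ### The two profiles and their effective preferences -/

section Main
variable {H : Type*} (w : Fin n ≃ H) (Rα Rβ Rγ : WeakOrder H) (h1 h2 : H) (i1 i2 : Fin n)

/-- Truth profile. -/
noncomputable def profT : Fin n → WeakOrder H := fun i =>
  if i = i1 then Rα else if i = i2 then Rβ else cPref Rα Rβ Rγ h1 h2 (w i)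

/-- Report profile: only `i1` deviates, to `Rγ`. -/
noncomputable def profR : Fin n → WeakOrder H := fun i =>
  if i = i1 then Rγ else profT w Rα Rβ Rγ h1 h2 i1 i2 i

/-- The fixed tie-breaking profile. -/
def tbP : Fin n → (Fin n → Fin n → Prop) := fun i =>
  if i = i1 then rkOrd (rkS i1 i2) else if i = i2 then rkOrd (rkS i2 i1)
  else rkOrd (rkC i1 i2 i)

theorem tbP_isTieBreak (i : Fin n) : IsTieBreak (tbP i1 i2 i) := by
  unfold tbP; split_ifs
  · exact isTieBreak_rkS _ _
  · exact isTieBreak_rkS _ _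
  · exact isTieBreak_rkC _ _ _

/-- Effective strict preferences in the truth run. -/
noncomputable def tpD : Fin n → H → H → Prop := fun i =>
  tieBroken w (profT w Rα Rβ Rγ h1 h2 i1 i2 i) (tbP i1 i2 i)

/-- Effective strict preferences in the report run. -/
noncomputable def rpD : Fin n → H → H → Prop := fun i =>
  tieBroken w (profR w Rα Rβ Rγ h1 h2 i1 i2 i) (tbP i1 i2 i)

variable {i1 i2}

theorem tp_i1 : tpD w Rα Rβ Rγ h1 h2 i1 i2 i1 = tieBroken w Rα (rkOrd (rkS i1 i2)) := by
  simp [tpD, profT, tbP]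

theorem tp_i2 (h21 : i2 ≠ i1) :
    tpD w Rα Rβ Rγ h1 h2 i1 i2 i2 = tieBroken w Rβ (rkOrd (rkS i2 i1)) := by
  simp [tpD, profT, tbP, h21]

theorem tp_crowd {v : Fin n} (hv1 : v ≠ i1) (hv2 : v ≠ i2) :
    tpD w Rα Rβ Rγ h1 h2 i1 i2 v =
      tieBroken w (cPref Rα Rβ Rγ h1 h2 (w v)) (rkOrd (rkC i1 i2 v)) := by
  simp [tpD, profT, tbP, hv1, hv2]

theorem rp_i1 : rpD w Rα Rβ Rγ h1 h2 i1 i2 i1 = tieBroken w Rγ (rkOrd (rkS i1 i2)) := by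
  simp [rpD, profR, tbP]

theorem rp_eq_tp {v : Fin n} (hv1 : v ≠ i1) :
    rpD w Rα Rβ Rγ h1 h2 i1 i2 v = tpD w Rα Rβ Rγ h1 h2 i1 i2 v := by
  simp [rpD, profR, tpD, hv1]

/-- Extract pointing dominance. -/
theorem dom_of_point (R : WeakOrder H) {lt : Fin n → Fin n → Prop} (hlt : IsTieBreak lt)
    {S : Finset (Fin n)} {v u j : Fin n} (hv : v ∈ S)
    (hpt : point w (tieBroken w R lt) S v = u) (hj : j ∈ S) (hju : j ≠ u) :
    tieBroken w R lt (w u) (w j) := by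
  have h := pointDom w R hlt hv j hj
  rw [hpt] at h
  exact h.resolve_left hju

end Main
section Preds
variable {H : Type*} (w : Fin n ≃ H) (Rα Rβ Rγ : WeakOrder H) (h1 h2 : H) {i1 i2 : Fin n}

theorem cPref_of_stuck {x : H} (hs : IsStuck Rα Rβ Rγ h1 h2 x) :
    cPref Rα Rβ Rγ h1 h2 x = Rα := by
  obtain ⟨hA, hB, hG⟩ := hs
  unfold cPref
  rw [if_neg hA, if_neg hB, if_neg hG]


/-- Any crowd agent pointing at `i2` must own a stuck house. -/
theorem pred_i2_isStuck (hI : Rα.I h1 h2) (hP : Rβ.P h1 h2) (hPγ : Rγ.P h2 h1)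
    (hw1 : w i1 = h1) (hw2 : w i2 = h2) (h12 : i1 ≠ i2)
    {S : Finset (Fin n)} {v : Fin n} (hv : v ∈ S)
    (hv1 : v ≠ i1) (hv2 : v ≠ i2)
    (hpt : point w (tpD w Rα Rβ Rγ h1 h2 i1 i2 v) S v = i2) :
    IsStuck Rα Rβ Rγ h1 h2 (w v) := by
  rw [tp_crowd w Rα Rβ Rγ h1 h2 hv1 hv2] at hpt
  rcases cPref_cases (Rα := Rα) (Rβ := Rβ) (Rγ := Rγ) (h1 := h1) (h2 := h2) (w v) with
    ⟨hc, _, hr2⟩ | ⟨hc, _, hr2⟩ | ⟨hc, _, hr2⟩ | ⟨_, hs⟩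
  · rw [hc] at hpt
    have hTB := dom_of_point w Rα (isTieBreak_rkC i1 i2 v) hv hpt hv hv2
    have hPP := tieBroken_P_agents w hTB (rkC_not_lt_self i1 i2 v i2)
    rw [hw2] at hPP
    exact absurd hr2 hPP.2
  · rw [hc] at hpt
    have hTB := dom_of_point w Rβ (isTieBreak_rkC i1 i2 v) hv hpt hv hv2
    have hPP := tieBroken_P_agents w hTB (rkC_not_lt_self i1 i2 v i2)
    rw [hw2] at hPP
    exact absurd hr2 hPP.2
  · rw [hc] at hpt
    have hTB := dom_of_point w Rγ (isTieBreak_rkC i1 i2 v) hv hpt hv hv2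
    have hPP := tieBroken_P_agents w hTB (rkC_not_lt_self i1 i2 v i2)
    rw [hw2] at hPP
    exact absurd hr2 hPP.2
  · exact hs

/-- While `i1` is present, a stuck agent cannot point at `i2`. -/
theorem stuck_point_i2_false (hI : Rα.I h1 h2) (hP : Rβ.P h1 h2) (hPγ : Rγ.P h2 h1)
    (hw1 : w i1 = h1) (hw2 : w i2 = h2) (h12 : i1 ≠ i2)
    {S : Finset (Fin n)} {z : Fin n} (hz : z ∈ S)
    (hz1 : z ≠ i1) (hz2 : z ≠ i2) (hstu : IsStuck Rα Rβ Rγ h1 h2 (w z))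
    (hi1S : i1 ∈ S)
    (hpt : point w (tpD w Rα Rβ Rγ h1 h2 i1 i2 z) S z = i2) : False := by
  rw [tp_crowd w Rα Rβ Rγ h1 h2 hz1 hz2, cPref_of_stuck Rα Rβ Rγ h1 h2 hstu] at hpt
  have hTB := dom_of_point w Rα (isTieBreak_rkC i1 i2 z) hz hpt hi1S h12
  have hPP := tieBroken_P_agents w hTB (rkC_i2_last i1 i2 z i1 hz2)
  rw [hw1, hw2] at hPP
  exact hPP.2 hI.1

/-- Any crowd agent pointing at `i1` must own a stuck house. -/
theorem pred_i1_isStuck (hI : Rα.I h1 h2) (hP : Rβ.P h1 h2) (hPγ : Rγ.P h2 h1)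
    (hw1 : w i1 = h1) (hw2 : w i2 = h2) (h12 : i1 ≠ i2)
    {S : Finset (Fin n)} {v : Fin n} (hv : v ∈ S)
    (hv1 : v ≠ i1) (hv2 : v ≠ i2) (hi2S : i2 ∈ S)
    (hpt : point w (tpD w Rα Rβ Rγ h1 h2 i1 i2 v) S v = i1) :
    IsStuck Rα Rβ Rγ h1 h2 (w v) := by
  rw [tp_crowd w Rα Rβ Rγ h1 h2 hv1 hv2] at hpt
  rcases cPref_cases (Rα := Rα) (Rβ := Rβ) (Rγ := Rγ) (h1 := h1) (h2 := h2) (w v) with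
    ⟨hc, hr1, _⟩ | ⟨hc, hr1, _⟩ | ⟨hc, _, _⟩ | ⟨_, hs⟩
  · rw [hc] at hpt
    have hTB := dom_of_point w Rα (isTieBreak_rkC i1 i2 v) hv hpt hv hv1
    have hPP := tieBroken_P_agents w hTB (rkC_not_lt_self i1 i2 v i1)
    rw [hw1] at hPP
    exact absurd hr1 hPP.2
  · rw [hc] at hpt
    have hTB := dom_of_point w Rβ (isTieBreak_rkC i1 i2 v) hv hpt hv hv1
    have hPP := tieBroken_P_agents w hTB (rkC_not_lt_self i1 i2 v i1)
    rw [hw1] at hPP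
    exact absurd hr1 hPP.2
  · rw [hc] at hpt
    have hTB := dom_of_point w Rγ (isTieBreak_rkC i1 i2 v) hv hpt hi2S (Ne.symm h12)
    have hrel := tieBroken_rel w hTB
    rw [hw1, hw2] at hrel
    exact absurd hrel hPγ.2
  · exact hs

/-- No crowd agent can point at a stuck agent. -/
theorem crowd_pred_stuck_false (hI : Rα.I h1 h2) (hP : Rβ.P h1 h2) (hPγ : Rγ.P h2 h1)
    (hw1 : w i1 = h1) (hw2 : w i2 = h2) (h12 : i1 ≠ i2)
    {S : Finset (Fin n)} {z v : Fin n} (hz : z ∈ S)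
    (hz1 : z ≠ i1) (hz2 : z ≠ i2) (hstu : IsStuck Rα Rβ Rγ h1 h2 (w z))
    (hv : v ∈ S) (hv1 : v ≠ i1) (hv2 : v ≠ i2) (hvz : v ≠ z) (hi2S : i2 ∈ S)
    (hpt : point w (tpD w Rα Rβ Rγ h1 h2 i1 i2 v) S v = z) : False := by
  obtain ⟨spA1, spA2, spB, spG⟩ := stuck_props hI hP hPγ hstu
  rw [tp_crowd w Rα Rβ Rγ h1 h2 hv1 hv2] at hpt
  have hi2z : i2 ≠ z := Ne.symm hz2
  rcases cPref_cases (Rα := Rα) (Rβ := Rβ) (Rγ := Rγ) (h1 := h1) (h2 := h2) (w v) with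
    ⟨hc, _, _⟩ | ⟨hc, hr1, _⟩ | ⟨hc, _, _⟩ | ⟨hc, _⟩
  · rw [hc] at hpt
    have hrel := tieBroken_rel w (dom_of_point w Rα (isTieBreak_rkC i1 i2 v) hv hpt hi2S hi2z)
    rw [hw2] at hrel
    exact spA2.2 hrel
  · rw [hc] at hpt
    have hrel := tieBroken_rel w (dom_of_point w Rβ (isTieBreak_rkC i1 i2 v) hv hpt hv hvz)
    exact spB.2 (Rβ.trans _ _ _ hrel hr1)
  · rw [hc] at hpt
    have hrel := tieBroken_rel w (dom_of_point w Rγ (isTieBreak_rkC i1 i2 v) hv hpt hi2S hi2z)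
    rw [hw2] at hrel
    exact spG.2 hrel
  · rw [hc] at hpt
    have hrel := tieBroken_rel w (dom_of_point w Rα (isTieBreak_rkC i1 i2 v) hv hpt hi2S hi2z)
    rw [hw2] at hrel
    exact spA2.2 hrel

/-- While `i1` is present, `i2` cannot point at a stuck agent. -/
theorem i2_pred_stuck_false (hI : Rα.I h1 h2) (hP : Rβ.P h1 h2) (hPγ : Rγ.P h2 h1)
    (hw1 : w i1 = h1) (hw2 : w i2 = h2) (h12 : i1 ≠ i2)
    {S : Finset (Fin n)} {z : Fin n} (hz : z ∈ S)
    (hz1 : z ≠ i1) (hz2 : z ≠ i2) (hstu : IsStuck Rα Rβ Rγ h1 h2 (w z))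
    (hi1S : i1 ∈ S) (hi2S : i2 ∈ S)
    (hpt : point w (tpD w Rα Rβ Rγ h1 h2 i1 i2 i2) S i2 = z) : False := by
  obtain ⟨_, _, spB, _⟩ := stuck_props hI hP hPγ hstu
  rw [tp_i2 w Rα Rβ Rγ h1 h2 (Ne.symm h12)] at hpt
  have hTB := dom_of_point w Rβ (isTieBreak_rkS i2 i1) hi2S hpt hi1S (Ne.symm hz1)
  have hPP := tieBroken_P_agents w hTB (rkS_not_lt_snd i2 i1 z hz2)
  rw [hw1] at hPP
  exact hPP.2 spB.1

/-- In the truth run, `i1` cannot point at a stuck agent. -/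
theorem i1T_pred_stuck_false (hI : Rα.I h1 h2) (hP : Rβ.P h1 h2) (hPγ : Rγ.P h2 h1)
    (hw1 : w i1 = h1) (hw2 : w i2 = h2) (h12 : i1 ≠ i2)
    {S : Finset (Fin n)} {z : Fin n} (hz : z ∈ S)
    (hz1 : z ≠ i1) (hz2 : z ≠ i2) (hstu : IsStuck Rα Rβ Rγ h1 h2 (w z))
    (hi1S : i1 ∈ S)
    (hpt : point w (tpD w Rα Rβ Rγ h1 h2 i1 i2 i1) S i1 = z) : False := by
  obtain ⟨spA1, _, _, _⟩ := stuck_props hI hP hPγ hstu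
  rw [tp_i1 w Rα Rβ Rγ h1 h2] at hpt
  have hTB := dom_of_point w Rα (isTieBreak_rkS i1 i2) hi1S hpt hi1S (Ne.symm hz1)
  have hPP := tieBroken_P_agents w hTB (rkS_not_lt_fst i1 i2 z)
  rw [hw1] at hPP
  exact hPP.2 spA1.1

/-- In the report run, `i1` cannot point at a stuck agent. -/
theorem i1R_pred_stuck_false (hI : Rα.I h1 h2) (hP : Rβ.P h1 h2) (hPγ : Rγ.P h2 h1)
    (hw1 : w i1 = h1) (hw2 : w i2 = h2) (h12 : i1 ≠ i2)
    {S : Finset (Fin n)} {z : Fin n} (hz : z ∈ S)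
    (hz1 : z ≠ i1) (hz2 : z ≠ i2) (hstu : IsStuck Rα Rβ Rγ h1 h2 (w z))
    (hi1S : i1 ∈ S) (hi2S : i2 ∈ S)
    (hpt : point w (rpD w Rα Rβ Rγ h1 h2 i1 i2 i1) S i1 = z) : False := by
  obtain ⟨_, _, _, spG⟩ := stuck_props hI hP hPγ hstu
  rw [rp_i1 w Rα Rβ Rγ h1 h2] at hpt
  have hrel := tieBroken_rel w
    (dom_of_point w Rγ (isTieBreak_rkS i1 i2) hi1S hpt hi2S (Ne.symm hz2))
  rw [hw2] at hrel
  exact spG.2 hrel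

/-- In the truth run, `i1` never points at `i2`. -/
theorem i1T_point_i2_false (hI : Rα.I h1 h2) (hP : Rβ.P h1 h2) (hPγ : Rγ.P h2 h1)
    (hw1 : w i1 = h1) (hw2 : w i2 = h2) (h12 : i1 ≠ i2)
    {S : Finset (Fin n)} (hi1S : i1 ∈ S)
    (hpt : point w (tpD w Rα Rβ Rγ h1 h2 i1 i2 i1) S i1 = i2) : False := by
  rw [tp_i1 w Rα Rβ Rγ h1 h2] at hpt
  have hTB := dom_of_point w Rα (isTieBreak_rkS i1 i2) hi1S hpt hi1S h12
  have hPP := tieBroken_P_agents w hTB (rkS_not_lt_fst i1 i2 i2)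
  rw [hw1, hw2] at hPP
  exact hPP.2 hI.1

/-- While `i1` is present, `i2` never points at itself. -/
theorem i2_point_self_false (hI : Rα.I h1 h2) (hP : Rβ.P h1 h2) (hPγ : Rγ.P h2 h1)
    (hw1 : w i1 = h1) (hw2 : w i2 = h2) (h12 : i1 ≠ i2)
    {S : Finset (Fin n)} (hi1S : i1 ∈ S) (hi2S : i2 ∈ S)
    (hpt : point w (tpD w Rα Rβ Rγ h1 h2 i1 i2 i2) S i2 = i2) : False := by
  rw [tp_i2 w Rα Rβ Rγ h1 h2 (Ne.symm h12)] at hpt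
  have hrel := tieBroken_rel w
    (dom_of_point w Rβ (isTieBreak_rkS i2 i1) hi2S hpt hi1S h12)
  rw [hw1, hw2] at hrel
  exact hP.2 hrel

/-- While `i2` is present, `i1` never points at itself in the report run. -/
theorem i1R_point_self_false (hI : Rα.I h1 h2) (hP : Rβ.P h1 h2) (hPγ : Rγ.P h2 h1)
    (hw1 : w i1 = h1) (hw2 : w i2 = h2) (h12 : i1 ≠ i2)
    {S : Finset (Fin n)} (hi1S : i1 ∈ S) (hi2S : i2 ∈ S)
    (hpt : point w (rpD w Rα Rβ Rγ h1 h2 i1 i2 i1) S i1 = i1) : False := by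
  rw [rp_i1 w Rα Rβ Rγ h1 h2] at hpt
  have hrel := tieBroken_rel w
    (dom_of_point w Rγ (isTieBreak_rkS i1 i2) hi1S hpt hi2S (Ne.symm h12))
  rw [hw1, hw2] at hrel
  exact hPγ.2 hrel

end Preds
section Cycles
variable {H : Type*} (w : Fin n ≃ H)

theorem cycle_chain {pref : Fin n → H → H → Prop} {S : Finset (Fin n)} {i : Fin n}
    (hiS : i ∈ S)
    (hEx : ∃ k, 0 < k ∧ (fun j => point w (pref j) S j)^[k] i = i) :
    ∃ k, 0 < k ∧
      (∀ m, (fun j => point w (pref j) S j)^[m] i ∈ S) ∧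
      (fun j => point w (pref j) S j)^[k] i = i ∧
      ∀ a b : ℕ, a < b → b < k →
        (fun j => point w (pref j) S j)^[a] i ≠ (fun j => point w (pref j) S j)^[b] i := by
  classical
  have hcS : ∀ m, (fun j => point w (pref j) S j)^[m] i ∈ S := by
    intro m; induction m with
    | zero => simpa using hiS
    | succ m ih =>
      rw [Function.iterate_succ_apply']
      exact point_mem w ih
  refine ⟨Nat.find hEx, (Nat.find_spec hEx).1, hcS, (Nat.find_spec hEx).2, ?_⟩
  intro a b hab hbk
  exact iterate_ne_of_min (Nat.find_spec hEx).2
    (fun m hm0 hmk he => Nat.find_min hEx hmk ⟨hm0, he⟩) hab hbk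

variable (Rα Rβ Rγ : WeakOrder H) (h1 h2 : H) {i1 i2 : Fin n}

/-- Truth run: if `i1` is periodic (with `i2` present) it points at itself. -/
theorem cycT_i1 (hI : Rα.I h1 h2) (hP : Rβ.P h1 h2) (hPγ : Rγ.P h2 h1)
    (hw1 : w i1 = h1) (hw2 : w i2 = h2) (h12 : i1 ≠ i2)
    {S : Finset (Fin n)} (hS1 : i1 ∈ S) (hS2 : i2 ∈ S)
    (hEx : ∃ k, 0 < k ∧
      (fun j => point w (tpD w Rα Rβ Rγ h1 h2 i1 i2 j) S j)^[k] i1 = i1) :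
    point w (tpD w Rα Rβ Rγ h1 h2 i1 i2 i1) S i1 = i1 := by
  classical
  obtain ⟨k, hk0, hcS, hfix, hdist⟩ := cycle_chain w hS1 hEx
  set f := fun j => point w (tpD w Rα Rβ Rγ h1 h2 i1 i2 j) S j with hf
  by_cases hk1 : k = 1
  · subst hk1; simpa using hfix
  · exfalso
    have hk2 : 2 ≤ k := by omega
    have hzS : f^[k-1] i1 ∈ S := hcS _
    have hvS : f^[k-2] i1 ∈ S := hcS _
    have hz1 : f^[k-1] i1 ≠ i1 := by
      have := hdist 0 (k-1) (by omega) (by omega)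
      simp only [Function.iterate_zero_apply] at this
      exact this.symm
    have hvz : f^[k-2] i1 ≠ f^[k-1] i1 := hdist (k-2) (k-1) (by omega) (by omega)
    have hptz : point w (tpD w Rα Rβ Rγ h1 h2 i1 i2 (f^[k-1] i1)) S (f^[k-1] i1) = i1 := by
      have e := Function.iterate_succ_apply' f (k-1) i1
      rw [show (k-1).succ = k from by omega] at e
      exact e.symm.trans hfix
    have hptv : point w (tpD w Rα Rβ Rγ h1 h2 i1 i2 (f^[k-2] i1)) S (f^[k-2] i1)
        = f^[k-1] i1 := by
      have e := Function.iterate_succ_apply' f (k-2) i1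
      rw [show (k-2).succ = k-1 from by omega] at e
      exact e.symm
    by_cases hz2 : f^[k-1] i1 = i2
    · rw [hz2] at hptv
      by_cases hv1 : f^[k-2] i1 = i1
      · rw [hv1] at hptv
        exact i1T_point_i2_false w Rα Rβ Rγ h1 h2 hI hP hPγ hw1 hw2 h12 hS1 hptv
      · by_cases hv2 : f^[k-2] i1 = i2
        · exact hvz (hv2.trans hz2.symm)
        · have hstu := pred_i2_isStuck w Rα Rβ Rγ h1 h2 hI hP hPγ hw1 hw2 h12
            hvS hv1 hv2 hptv
          exact stuck_point_i2_false w Rα Rβ Rγ h1 h2 hI hP hPγ hw1 hw2 h12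
            hvS hv1 hv2 hstu hS1 hptv
    · have hstu := pred_i1_isStuck w Rα Rβ Rγ h1 h2 hI hP hPγ hw1 hw2 h12
        hzS hz1 hz2 hS2 hptz
      by_cases hv1 : f^[k-2] i1 = i1
      · rw [hv1] at hptv
        exact i1T_pred_stuck_false w Rα Rβ Rγ h1 h2 hI hP hPγ hw1 hw2 h12
          hzS hz1 hz2 hstu hS1 hptv
      · by_cases hv2 : f^[k-2] i1 = i2
        · rw [hv2] at hptv
          exact i2_pred_stuck_false w Rα Rβ Rγ h1 h2 hI hP hPγ hw1 hw2 h12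
            hzS hz1 hz2 hstu hS1 hS2 hptv
        · exact crowd_pred_stuck_false w Rα Rβ Rγ h1 h2 hI hP hPγ hw1 hw2 h12
            hzS hz1 hz2 hstu hvS hv1 hv2 hvz hS2 hptv

/-- Truth run: `i2` is never periodic while `i1` is present. -/
theorem cycT_i2 (hI : Rα.I h1 h2) (hP : Rβ.P h1 h2) (hPγ : Rγ.P h2 h1)
    (hw1 : w i1 = h1) (hw2 : w i2 = h2) (h12 : i1 ≠ i2)
    {S : Finset (Fin n)} (hS1 : i1 ∈ S) (hS2 : i2 ∈ S)
    (hEx : ∃ k, 0 < k ∧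
      (fun j => point w (tpD w Rα Rβ Rγ h1 h2 i1 i2 j) S j)^[k] i2 = i2) : False := by
  classical
  obtain ⟨k, hk0, hcS, hfix, hdist⟩ := cycle_chain w hS2 hEx
  set f := fun j => point w (tpD w Rα Rβ Rγ h1 h2 i1 i2 j) S j with hf
  by_cases hk1 : k = 1
  · have hpt : point w (tpD w Rα Rβ Rγ h1 h2 i1 i2 i2) S i2 = i2 := by
      have h : f i2 = i2 := by
        have := hfix; rw [hk1] at this; simpa using this
      exact h
    exact i2_point_self_false w Rα Rβ Rγ h1 h2 hI hP hPγ hw1 hw2 h12 hS1 hS2 hpt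
  · have hk2 : 2 ≤ k := by omega
    have hzS : f^[k-1] i2 ∈ S := hcS _
    have hz2 : f^[k-1] i2 ≠ i2 := by
      have := hdist 0 (k-1) (by omega) (by omega)
      simp only [Function.iterate_zero_apply] at this
      exact this.symm
    have hptz : point w (tpD w Rα Rβ Rγ h1 h2 i1 i2 (f^[k-1] i2)) S (f^[k-1] i2) = i2 := by
      have e := Function.iterate_succ_apply' f (k-1) i2
      rw [show (k-1).succ = k from by omega] at e
      exact e.symm.trans hfix
    by_cases hz1 : f^[k-1] i2 = i1
    · rw [hz1] at hptz
      exact i1T_point_i2_false w Rα Rβ Rγ h1 h2 hI hP hPγ hw1 hw2 h12 hS1 hptz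
    · have hstu := pred_i2_isStuck w Rα Rβ Rγ h1 h2 hI hP hPγ hw1 hw2 h12
        hzS hz1 hz2 hptz
      exact stuck_point_i2_false w Rα Rβ Rγ h1 h2 hI hP hPγ hw1 hw2 h12
        hzS hz1 hz2 hstu hS1 hptz

/-- Truth run after `i1` has left: if `i2` is periodic its pointee's house is
strictly worse than `h1` for `Rβ`. -/
theorem cyc2 (hI : Rα.I h1 h2) (hP : Rβ.P h1 h2) (hPγ : Rγ.P h2 h1)
    (hw1 : w i1 = h1) (hw2 : w i2 = h2) (h12 : i1 ≠ i2)
    {S : Finset (Fin n)} (hS1 : i1 ∉ S) (hS2 : i2 ∈ S)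
    (hEx : ∃ k, 0 < k ∧
      (fun j => point w (tpD w Rα Rβ Rγ h1 h2 i1 i2 j) S j)^[k] i2 = i2) :
    Rβ.P h1 (w (point w (tpD w Rα Rβ Rγ h1 h2 i1 i2 i2) S i2)) := by
  classical
  obtain ⟨k, hk0, hcS, hfix, hdist⟩ := cycle_chain w hS2 hEx
  set f := fun j => point w (tpD w Rα Rβ Rγ h1 h2 i1 i2 j) S j with hf
  by_cases hk1 : k = 1
  · have hpt : point w (tpD w Rα Rβ Rγ h1 h2 i1 i2 i2) S i2 = i2 := by
      have h : f i2 = i2 := by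
        have := hfix; rw [hk1] at this; simpa using this
      exact h
    rw [hpt, hw2]; exact hP
  · have hk2 : 2 ≤ k := by omega
    have hzS : f^[k-1] i2 ∈ S := hcS _
    have hz2 : f^[k-1] i2 ≠ i2 := by
      have := hdist 0 (k-1) (by omega) (by omega)
      simp only [Function.iterate_zero_apply] at this
      exact this.symm
    have hz1 : f^[k-1] i2 ≠ i1 := fun e => hS1 (e ▸ hzS)
    have hptz : point w (tpD w Rα Rβ Rγ h1 h2 i1 i2 (f^[k-1] i2)) S (f^[k-1] i2) = i2 := by
      have e := Function.iterate_succ_apply' f (k-1) i2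
      rw [show (k-1).succ = k from by omega] at e
      exact e.symm.trans hfix
    have hstu := pred_i2_isStuck w Rα Rβ Rγ h1 h2 hI hP hPγ hw1 hw2 h12
      hzS hz1 hz2 hptz
    have hvS : f^[k-2] i2 ∈ S := hcS _
    have hvz : f^[k-2] i2 ≠ f^[k-1] i2 := hdist (k-2) (k-1) (by omega) (by omega)
    have hptv : point w (tpD w Rα Rβ Rγ h1 h2 i1 i2 (f^[k-2] i2)) S (f^[k-2] i2)
        = f^[k-1] i2 := by
      have e := Function.iterate_succ_apply' f (k-2) i2
      rw [show (k-2).succ = k-1 from by omega] at e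
      exact e.symm
    by_cases hv2 : f^[k-2] i2 = i2
    · rw [hv2] at hptv
      rw [hptv]
      exact (stuck_props hI hP hPγ hstu).2.2.1
    · exfalso
      have hv1 : f^[k-2] i2 ≠ i1 := fun e => hS1 (e ▸ hvS)
      exact crowd_pred_stuck_false w Rα Rβ Rγ h1 h2 hI hP hPγ hw1 hw2 h12
        hzS hz1 hz2 hstu hvS hv1 hv2 hvz hS2 hptv

end Cycles
section CycleR
variable {H : Type*} (w : Fin n ≃ H) (Rα Rβ Rγ : WeakOrder H) (h1 h2 : H) {i1 i2 : Fin n}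

/-- Report run: if `i1` or `i2` is periodic, they form the mutual 2-cycle. -/
theorem cycR (hI : Rα.I h1 h2) (hP : Rβ.P h1 h2) (hPγ : Rγ.P h2 h1)
    (hw1 : w i1 = h1) (hw2 : w i2 = h2) (h12 : i1 ≠ i2)
    {S : Finset (Fin n)} (hS1 : i1 ∈ S) (hS2 : i2 ∈ S)
    (hEx : (∃ k, 0 < k ∧
        (fun j => point w (rpD w Rα Rβ Rγ h1 h2 i1 i2 j) S j)^[k] i1 = i1) ∨
      (∃ k, 0 < k ∧
        (fun j => point w (rpD w Rα Rβ Rγ h1 h2 i1 i2 j) S j)^[k] i2 = i2)) :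
    point w (rpD w Rα Rβ Rγ h1 h2 i1 i2 i1) S i1 = i2 ∧
      point w (rpD w Rα Rβ Rγ h1 h2 i1 i2 i2) S i2 = i1 := by
  classical
  have hrp2 : rpD w Rα Rβ Rγ h1 h2 i1 i2 i2 = tpD w Rα Rβ Rγ h1 h2 i1 i2 i2 :=
    rp_eq_tp w Rα Rβ Rγ h1 h2 (Ne.symm h12)
  rcases hEx with hEx | hEx
  · -- i1 periodic
    obtain ⟨k, hk0, hcS, hfix, hdist⟩ := cycle_chain w hS1 hEx
    set f := fun j => point w (rpD w Rα Rβ Rγ h1 h2 i1 i2 j) S j with hf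
    by_cases hk1 : k = 1
    · exfalso
      have hpt : point w (rpD w Rα Rβ Rγ h1 h2 i1 i2 i1) S i1 = i1 := by
        have := hfix; rw [hk1] at this; simpa using this
      exact i1R_point_self_false w Rα Rβ Rγ h1 h2 hI hP hPγ hw1 hw2 h12 hS1 hS2 hpt
    · have hk2 : 2 ≤ k := by omega
      have hzS : f^[k-1] i1 ∈ S := hcS _
      have hvS : f^[k-2] i1 ∈ S := hcS _
      have hz1 : f^[k-1] i1 ≠ i1 := by
        have := hdist 0 (k-1) (by omega) (by omega)
        simp only [Function.iterate_zero_apply] at this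
        exact this.symm
      have hvz : f^[k-2] i1 ≠ f^[k-1] i1 := hdist (k-2) (k-1) (by omega) (by omega)
      have hptz : point w (rpD w Rα Rβ Rγ h1 h2 i1 i2 (f^[k-1] i1)) S (f^[k-1] i1) = i1 := by
        have e := Function.iterate_succ_apply' f (k-1) i1
        rw [show (k-1).succ = k from by omega] at e
        exact e.symm.trans hfix
      have hptv : point w (rpD w Rα Rβ Rγ h1 h2 i1 i2 (f^[k-2] i1)) S (f^[k-2] i1)
          = f^[k-1] i1 := by
        have e := Function.iterate_succ_apply' f (k-2) i1
        rw [show (k-2).succ = k-1 from by omega] at e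
        exact e.symm
      by_cases hz2 : f^[k-1] i1 = i2
      · -- z = i2 : i2 points at i1
        rw [hz2] at hptz hptv
        rw [hrp2] at hptz
        by_cases hv1 : f^[k-2] i1 = i1
        · rw [hv1] at hptv
          exact ⟨hptv, by rw [hrp2]; exact hptz⟩
        · exfalso
          by_cases hv2 : f^[k-2] i1 = i2
          · exact hvz (hv2.trans hz2.symm)
          · rw [rp_eq_tp w Rα Rβ Rγ h1 h2 hv1] at hptv
            have hstu := pred_i2_isStuck w Rα Rβ Rγ h1 h2 hI hP hPγ hw1 hw2 h12
              hvS hv1 hv2 hptv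
            exact stuck_point_i2_false w Rα Rβ Rγ h1 h2 hI hP hPγ hw1 hw2 h12
              hvS hv1 hv2 hstu hS1 hptv
      · -- z crowd
        exfalso
        rw [rp_eq_tp w Rα Rβ Rγ h1 h2 hz1] at hptz
        have hstu := pred_i1_isStuck w Rα Rβ Rγ h1 h2 hI hP hPγ hw1 hw2 h12
          hzS hz1 hz2 hS2 hptz
        by_cases hv1 : f^[k-2] i1 = i1
        · rw [hv1] at hptv
          exact i1R_pred_stuck_false w Rα Rβ Rγ h1 h2 hI hP hPγ hw1 hw2 h12
            hzS hz1 hz2 hstu hS1 hS2 hptv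
        · by_cases hv2 : f^[k-2] i1 = i2
          · rw [hv2, hrp2] at hptv
            exact i2_pred_stuck_false w Rα Rβ Rγ h1 h2 hI hP hPγ hw1 hw2 h12
              hzS hz1 hz2 hstu hS1 hS2 hptv
          · rw [rp_eq_tp w Rα Rβ Rγ h1 h2 hv1] at hptv
            exact crowd_pred_stuck_false w Rα Rβ Rγ h1 h2 hI hP hPγ hw1 hw2 h12
              hzS hz1 hz2 hstu hvS hv1 hv2 hvz hS2 hptv
  · -- i2 periodic
    obtain ⟨k, hk0, hcS, hfix, hdist⟩ := cycle_chain w hS2 hEx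
    set f := fun j => point w (rpD w Rα Rβ Rγ h1 h2 i1 i2 j) S j with hf
    by_cases hk1 : k = 1
    · exfalso
      have hpt : point w (tpD w Rα Rβ Rγ h1 h2 i1 i2 i2) S i2 = i2 := by
        rw [← hrp2]
        have := hfix; rw [hk1] at this; simpa using this
      exact i2_point_self_false w Rα Rβ Rγ h1 h2 hI hP hPγ hw1 hw2 h12 hS1 hS2 hpt
    · have hk2 : 2 ≤ k := by omega
      have hzS : f^[k-1] i2 ∈ S := hcS _
      have hvS : f^[k-2] i2 ∈ S := hcS _
      have hz2 : f^[k-1] i2 ≠ i2 := by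
        have := hdist 0 (k-1) (by omega) (by omega)
        simp only [Function.iterate_zero_apply] at this
        exact this.symm
      have hvz : f^[k-2] i2 ≠ f^[k-1] i2 := hdist (k-2) (k-1) (by omega) (by omega)
      have hptz : point w (rpD w Rα Rβ Rγ h1 h2 i1 i2 (f^[k-1] i2)) S (f^[k-1] i2) = i2 := by
        have e := Function.iterate_succ_apply' f (k-1) i2
        rw [show (k-1).succ = k from by omega] at e
        exact e.symm.trans hfix
      have hptv : point w (rpD w Rα Rβ Rγ h1 h2 i1 i2 (f^[k-2] i2)) S (f^[k-2] i2)
          = f^[k-1] i2 := by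
        have e := Function.iterate_succ_apply' f (k-2) i2
        rw [show (k-2).succ = k-1 from by omega] at e
        exact e.symm
      by_cases hz1 : f^[k-1] i2 = i1
      · -- z = i1: i1 points at i2
        rw [hz1] at hptz hptv
        by_cases hv2 : f^[k-2] i2 = i2
        · rw [hv2, hrp2] at hptv
          exact ⟨hptz, by rw [hrp2]; exact hptv⟩
        · exfalso
          by_cases hv1 : f^[k-2] i2 = i1
          · exact hvz (hv1.trans hz1.symm)
          · -- crowd v points at i1
            rw [rp_eq_tp w Rα Rβ Rγ h1 h2 hv1] at hptv
            have hstuv := pred_i1_isStuck w Rα Rβ Rγ h1 h2 hI hP hPγ hw1 hw2 h12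
              hvS hv1 hv2 hS2 hptv
            -- need the third member u = f^[k-3] i2
            have hk3 : 3 ≤ k := by
              rcases Nat.lt_or_ge k 3 with h | h
              · exfalso
                have : k = 2 := by omega
                rw [this] at hv2
                simp at hv2
              · exact h
            have huS : f^[k-3] i2 ∈ S := hcS _
            have huv : f^[k-3] i2 ≠ f^[k-2] i2 := hdist (k-3) (k-2) (by omega) (by omega)
            have hptu : point w (rpD w Rα Rβ Rγ h1 h2 i1 i2 (f^[k-3] i2)) S (f^[k-3] i2)
                = f^[k-2] i2 := by
              have e := Function.iterate_succ_apply' f (k-3) i2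
              rw [show (k-3).succ = k-2 from by omega] at e
              exact e.symm
            by_cases hu2 : f^[k-3] i2 = i2
            · rw [hu2, hrp2] at hptu
              exact i2_pred_stuck_false w Rα Rβ Rγ h1 h2 hI hP hPγ hw1 hw2 h12
                hvS hv1 hv2 hstuv hS1 hS2 hptu
            · by_cases hu1 : f^[k-3] i2 = i1
              · -- then i1 occurs twice on the cycle: contradiction
                exact (hdist (k-3) (k-1) (by omega) (by omega)) (hu1.trans hz1.symm)
              · rw [rp_eq_tp w Rα Rβ Rγ h1 h2 hu1] at hptu
                exact crowd_pred_stuck_false w Rα Rβ Rγ h1 h2 hI hP hPγ hw1 hw2 h12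
                  hvS hv1 hv2 hstuv huS hu1 hu2 huv hS2 hptu
      · -- z crowd or z = i2 (excluded): crowd
        exfalso
        rw [rp_eq_tp w Rα Rβ Rγ h1 h2 hz1] at hptz
        have hstu := pred_i2_isStuck w Rα Rβ Rγ h1 h2 hI hP hPγ hw1 hw2 h12
          hzS hz1 hz2 hptz
        exact stuck_point_i2_false w Rα Rβ Rγ h1 h2 hI hP hPγ hw1 hw2 h12
          hzS hz1 hz2 hstu hS1 hptz

end CycleR
section Runs
variable {H : Type*} (w : Fin n ≃ H)

theorem mem_cycleAgents_iff {pref : Fin n → H → H → Prop} {S : Finset (Fin n)} {i : Fin n} :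
    i ∈ cycleAgents w pref S ↔
      i ∈ S ∧ ∃ k, 0 < k ∧ (fun j => point w (pref j) S j)^[k] i = i := by
  simp [cycleAgents]

theorem cycleAgents_subset {pref : Fin n → H → H → Prop} {S : Finset (Fin n)} :
    cycleAgents w pref S ⊆ S := Finset.filter_subset _ _

theorem cycleAgents_nonempty {pref : Fin n → H → H → Prop} {S : Finset (Fin n)}
    (hS : S.Nonempty) : (cycleAgents w pref S).Nonempty := by
  classical
  obtain ⟨a, ha⟩ := hS
  set f := fun j => point w (pref j) S j with hf
  have hmaps : ∀ m : ℕ, f^[m] a ∈ S := by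
    intro m; induction m with
    | zero => simpa using ha
    | succ m ih => rw [Function.iterate_succ_apply']; exact point_mem w ih
  have hcard : S.card < (Finset.range (S.card + 1)).card := by simp
  obtain ⟨x, hx, y, hy, hxy, he⟩ :=
    Finset.exists_ne_map_eq_of_card_lt_of_maps_to hcard (fun m _ => hmaps m)
  rcases Nat.lt_or_ge x y with h | h
  · refine ⟨f^[x] a, (mem_cycleAgents_iff w).2 ⟨hmaps x, y - x, by omega, ?_⟩⟩
    rw [← Function.iterate_add_apply, show y - x + x = y from by omega]
    exact he.symm
  · have h' : y < x := by omega
    refine ⟨f^[y] a, (mem_cycleAgents_iff w).2 ⟨hmaps y, x - y, by omega, ?_⟩⟩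
    rw [← Function.iterate_add_apply, show x - y + y = x from by omega]
    exact he

theorem TTCaux_zero {pref : Fin n → H → H → Prop} {S : Finset (Fin n)} {i : Fin n} :
    TTCaux w pref 0 S i = w i := rfl

theorem TTCaux_succ {pref : Fin n → H → H → Prop} {fuel : ℕ} {S : Finset (Fin n)} {i : Fin n} :
    TTCaux w pref (fuel + 1) S i =
      if i ∈ cycleAgents w pref S then w (point w (pref i) S i)
      else TTCaux w pref fuel (S \ cycleAgents w pref S) i := rfl

variable (Rα Rβ Rγ : WeakOrder H) (h1 h2 : H) {i1 i2 : Fin n}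

/-- After `i1` has left, `i2` always ends up with a house `Rβ`-strictly below `h1`. -/
theorem prop2 (hI : Rα.I h1 h2) (hP : Rβ.P h1 h2) (hPγ : Rγ.P h2 h1)
    (hw1 : w i1 = h1) (hw2 : w i2 = h2) (h12 : i1 ≠ i2) :
    ∀ (fuel : ℕ) (S : Finset (Fin n)), i1 ∉ S → i2 ∈ S →
      Rβ.P h1 (TTCaux w (tpD w Rα Rβ Rγ h1 h2 i1 i2) fuel S i2) := by
  intro fuel
  induction fuel with
  | zero =>
    intro S _ _
    rw [TTCaux_zero, hw2]; exact hP
  | succ fuel IH =>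
    intro S h1S h2S
    rw [TTCaux_succ]
    by_cases hc : i2 ∈ cycleAgents w (tpD w Rα Rβ Rγ h1 h2 i1 i2) S
    · rw [if_pos hc]
      exact cyc2 w Rα Rβ Rγ h1 h2 hI hP hPγ hw1 hw2 h12 h1S h2S
        ((mem_cycleAgents_iff w).1 hc).2
    · rw [if_neg hc]
      exact IH _ (fun hmem => h1S (Finset.mem_sdiff.1 hmem).1)
        (Finset.mem_sdiff.2 ⟨h2S, hc⟩)

/-- The truth run: `i1` keeps `h1`, and `i2` gets a house strictly `Rβ`-below `h1`. -/
theorem propT1 (hI : Rα.I h1 h2) (hP : Rβ.P h1 h2) (hPγ : Rγ.P h2 h1)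
    (hw1 : w i1 = h1) (hw2 : w i2 = h2) (h12 : i1 ≠ i2) :
    ∀ (fuel : ℕ) (S : Finset (Fin n)), i1 ∈ S → i2 ∈ S →
      TTCaux w (tpD w Rα Rβ Rγ h1 h2 i1 i2) fuel S i1 = h1 ∧
      Rβ.P h1 (TTCaux w (tpD w Rα Rβ Rγ h1 h2 i1 i2) fuel S i2) := by
  intro fuel
  induction fuel with
  | zero =>
    intro S _ _
    exact ⟨hw1, by rw [TTCaux_zero, hw2]; exact hP⟩
  | succ fuel IH =>
    intro S h1S h2S
    have hni2 : i2 ∉ cycleAgents w (tpD w Rα Rβ Rγ h1 h2 i1 i2) S := by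
      intro hc
      exact cycT_i2 w Rα Rβ Rγ h1 h2 hI hP hPγ hw1 hw2 h12 h1S h2S
        ((mem_cycleAgents_iff w).1 hc).2
    by_cases hc1 : i1 ∈ cycleAgents w (tpD w Rα Rβ Rγ h1 h2 i1 i2) S
    · have hpt := cycT_i1 w Rα Rβ Rγ h1 h2 hI hP hPγ hw1 hw2 h12 h1S h2S
        ((mem_cycleAgents_iff w).1 hc1).2
      constructor
      · rw [TTCaux_succ, if_pos hc1, hpt, hw1]
      · rw [TTCaux_succ, if_neg hni2]
        refine prop2 w Rα Rβ Rγ h1 h2 hI hP hPγ hw1 hw2 h12 _ _ ?_ ?_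
        · intro hmem
          exact (Finset.mem_sdiff.1 hmem).2 hc1
        · exact Finset.mem_sdiff.2 ⟨h2S, hni2⟩
    · constructor
      · rw [TTCaux_succ, if_neg hc1]
        exact (IH _ (Finset.mem_sdiff.2 ⟨h1S, hc1⟩) (Finset.mem_sdiff.2 ⟨h2S, hni2⟩)).1
      · rw [TTCaux_succ, if_neg hni2]
        exact (IH _ (Finset.mem_sdiff.2 ⟨h1S, hc1⟩) (Finset.mem_sdiff.2 ⟨h2S, hni2⟩)).2

/-- The report run: `i1` and `i2` trade `h1` for `h2`. -/
theorem propR (hI : Rα.I h1 h2) (hP : Rβ.P h1 h2) (hPγ : Rγ.P h2 h1)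
    (hw1 : w i1 = h1) (hw2 : w i2 = h2) (h12 : i1 ≠ i2) :
    ∀ (fuel : ℕ) (S : Finset (Fin n)), i1 ∈ S → i2 ∈ S → S.card ≤ fuel →
      TTCaux w (rpD w Rα Rβ Rγ h1 h2 i1 i2) fuel S i1 = h2 ∧
      TTCaux w (rpD w Rα Rβ Rγ h1 h2 i1 i2) fuel S i2 = h1 := by
  intro fuel
  induction fuel with
  | zero =>
    intro S h1S _ hcard
    exfalso
    have : S = ∅ := Finset.card_eq_zero.1 (Nat.le_zero.1 hcard)
    rw [this] at h1S
    simp at h1S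
  | succ fuel IH =>
    intro S h1S h2S hcard
    by_cases hc1 : i1 ∈ cycleAgents w (rpD w Rα Rβ Rγ h1 h2 i1 i2) S
    · have hwin := cycR w Rα Rβ Rγ h1 h2 hI hP hPγ hw1 hw2 h12 h1S h2S
        (Or.inl ((mem_cycleAgents_iff w).1 hc1).2)
      have hc2 : i2 ∈ cycleAgents w (rpD w Rα Rβ Rγ h1 h2 i1 i2) S := by
        refine (mem_cycleAgents_iff w).2 ⟨h2S, 2, by omega, ?_⟩
        set f := fun j => point w (rpD w Rα Rβ Rγ h1 h2 i1 i2 j) S j with hf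
        have e2 : f^[2] i2 = f (f^[1] i2) := Function.iterate_succ_apply' f 1 i2
        rw [e2, Function.iterate_one]
        have e3 : f i2 = i1 := hwin.2
        rw [e3]
        exact hwin.1
      constructor
      · rw [TTCaux_succ, if_pos hc1, hwin.1, hw2]
      · rw [TTCaux_succ, if_pos hc2, hwin.2, hw1]
    · by_cases hc2 : i2 ∈ cycleAgents w (rpD w Rα Rβ Rγ h1 h2 i1 i2) S
      · exfalso
        have hwin := cycR w Rα Rβ Rγ h1 h2 hI hP hPγ hw1 hw2 h12 h1S h2S
          (Or.inr ((mem_cycleAgents_iff w).1 hc2).2)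
        apply hc1
        refine (mem_cycleAgents_iff w).2 ⟨h1S, 2, by omega, ?_⟩
        set f := fun j => point w (rpD w Rα Rβ Rγ h1 h2 i1 i2 j) S j with hf
        have e2 : f^[2] i1 = f (f^[1] i1) := Function.iterate_succ_apply' f 1 i1
        rw [e2, Function.iterate_one]
        have e3 : f i1 = i2 := hwin.1
        rw [e3]
        exact hwin.2
      · have hne : (cycleAgents w (rpD w Rα Rβ Rγ h1 h2 i1 i2) S).Nonempty :=
          cycleAgents_nonempty w ⟨i1, h1S⟩
        have hss : S \ cycleAgents w (rpD w Rα Rβ Rγ h1 h2 i1 i2) S ⊂ S :=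
          Finset.sdiff_ssubset (cycleAgents_subset w) hne
        have hcard' : (S \ cycleAgents w (rpD w Rα Rβ Rγ h1 h2 i1 i2) S).card ≤ fuel := by
          have := Finset.card_lt_card hss
          omega
        rw [TTCaux_succ, if_neg hc1, TTCaux_succ, if_neg hc2]
        exact IH _ (Finset.mem_sdiff.2 ⟨h1S, hc1⟩) (Finset.mem_sdiff.2 ⟨h2S, hc2⟩) hcard'

end Runs
end Aux
/-- if a symmetric domain `𝓡` is not contained in any objective
indifferences domain, then some `TTC_≻` admits a profitable group manipulation
within `𝓡`; hence objective indifferences domains are exactly the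
symmetric-maximal domains for group strategy-proofness of `TTC_≻` mechanisms. -/
theorem TTCtb_not_GSP_beyond_objInd_symmetric {n : ℕ} {H : Type*} (hn : 2 ≤ n)
    (w : Fin n ≃ H) (𝓡 : Set (WeakOrder H))
    (hsym : ∀ Ri ∈ 𝓡, ∀ a b : H, (Ri : WeakOrder H).P a b → ∃ R' ∈ 𝓡, (R' : WeakOrder H).P b a)
    (Rα Rβ : WeakOrder H) (hα : Rα ∈ 𝓡) (hβ : Rβ ∈ 𝓡)
    (h1 h2 : H) (hI : Rα.I h1 h2) (hP : Rβ.P h1 h2) :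
    ∃ R : Fin n → WeakOrder H, (∀ i, R i ∈ 𝓡) ∧
      ∃ tb : Fin n → Fin n → Fin n → Prop, (∀ i, IsTieBreak (tb i)) ∧
        ∃ (Q : Finset (Fin n)) (R' : Fin n → WeakOrder H),
          (∀ i, R' i ∈ 𝓡) ∧ (∀ i ∉ Q, R' i = R i) ∧
          (∀ i ∈ Q, (R i).rel (TTCtb w R' tb i) (TTCtb w R tb i)) ∧
          ∃ i ∈ Q, (R i).P (TTCtb w R' tb i) (TTCtb w R tb i) := by
  classical
  obtain ⟨Rγ, hγ, hPγ⟩ := hsym Rβ hβ h1 h2 hP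
  set i1 := w.symm h1 with hi1def
  set i2 := w.symm h2 with hi2def
  have hw1 : w i1 = h1 := w.apply_symm_apply h1
  have hw2 : w i2 = h2 := w.apply_symm_apply h2
  have hne : h1 ≠ h2 := by
    intro e
    exact hP.2 (e ▸ hP.1)
  have h12 : i1 ≠ i2 := by
    intro e
    exact hne (by rw [← hw1, ← hw2, e])
  have hmemT : ∀ i, profT w Rα Rβ Rγ h1 h2 i1 i2 i ∈ 𝓡 := by
    intro i
    unfold profT
    split_ifs
    · exact hα
    · exact hβ
    · rcases cPref_mem_triple (Rα := Rα) (Rβ := Rβ) (Rγ := Rγ) (h1 := h1) (h2 := h2) (w i)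
        with h | h | h
      · rw [h]; exact hα
      · rw [h]; exact hβ
      · rw [h]; exact hγ
  have hmemR : ∀ i, profR w Rα Rβ Rγ h1 h2 i1 i2 i ∈ 𝓡 := by
    intro i
    unfold profR
    split_ifs
    · exact hγ
    · exact hmemT i
  -- identify the two runs
  have eT : TTCtb w (profT w Rα Rβ Rγ h1 h2 i1 i2) (tbP i1 i2) =
      TTCaux w (tpD w Rα Rβ Rγ h1 h2 i1 i2) n Finset.univ := rfl
  have eR : TTCtb w (profR w Rα Rβ Rγ h1 h2 i1 i2) (tbP i1 i2) =
      TTCaux w (rpD w Rα Rβ Rγ h1 h2 i1 i2) n Finset.univ := rfl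
  have hTruth := propT1 w Rα Rβ Rγ h1 h2 hI hP hPγ hw1 hw2 h12 n Finset.univ
    (Finset.mem_univ i1) (Finset.mem_univ i2)
  have hRep := propR w Rα Rβ Rγ h1 h2 hI hP hPγ hw1 hw2 h12 n Finset.univ
    (Finset.mem_univ i1) (Finset.mem_univ i2) (by simp)
  refine ⟨profT w Rα Rβ Rγ h1 h2 i1 i2, hmemT, tbP i1 i2,
    (fun i => tbP_isTieBreak i1 i2 i), {i1, i2}, profR w Rα Rβ Rγ h1 h2 i1 i2,
    hmemR, ?_, ?_, ?_⟩
  · intro i hiQ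
    have hi1 : i ≠ i1 := by
      intro e; exact hiQ (by rw [e]; simp)
    unfold profR
    rw [if_neg hi1]
  · intro i hiQ
    rcases Finset.mem_insert.1 hiQ with rfl | hiQ
    · -- i = i1
      have hpf : profT w Rα Rβ Rγ h1 h2 i1 i2 i1 = Rα := by
        unfold profT; rw [if_pos rfl]
      rw [hpf, eT, eR, hTruth.1, hRep.1]
      exact hI.2
    · have hii2 : i = i2 := Finset.mem_singleton.1 hiQ
      have hpf : profT w Rα Rβ Rγ h1 h2 i1 i2 i2 = Rβ := by
        unfold profT; rw [if_neg (Ne.symm h12), if_pos rfl]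
      rw [hii2, hpf, eT, eR, hRep.2]
      exact hTruth.2.1
  · refine ⟨i2, by simp, ?_⟩
    have hpf : profT w Rα Rβ Rγ h1 h2 i1 i2 i2 = Rβ := by
      unfold profT; rw [if_neg (Ne.symm h12), if_pos rfl]
    rw [hpf, eT, eR, hRep.2]
    exact hTruth.2

end ShapleyScarf
end

section
/- With H = {h_1, h_2} and the partition 𝓗 = {{h_1, h_2}}, the expanded domain 𝓡' = {h_1 I h_2, h_1 P h_2} strictly contains the objective indifferences domain R(𝓗), and for every tie-breaking profile ≻, TTC_≻ is group strategy-proof on 𝓡' in the two-agent market. Hence objective indifferences domains are not maximal (without the symmetry restriction) for group strategy-proofness of TTC_≻ mechanisms. -/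
open scoped Classical

namespace ShapleyScarf

section Aux

lemma iterFix {α : Type*} (f : α → α) {a b : α} (h1 : f a = b) (h2 : f b = b) :
    ∀ k, 0 < k → f^[k] a = b := by
  intro k hk
  obtain ⟨n, rfl⟩ := Nat.exists_eq_succ_of_ne_zero hk.ne'
  rw [Function.iterate_succ_apply, h1, Function.iterate_fixed h2]

lemma point_univ (q : Fin 2 → Fin 2 → Prop) (hq : q 0 1 ↔ ¬ q 1 0) (i : Fin 2) :
    point (Equiv.refl (Fin 2)) q Finset.univ i = if q 0 1 then 0 else 1 := by
  have hfil : (Finset.univ.filter fun m => ∀ j ∈ Finset.univ,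
      j = m ∨ q ((Equiv.refl (Fin 2)) m) ((Equiv.refl (Fin 2)) j)) =
      {if q 0 1 then 0 else 1} := by
    ext m
    simp only [Finset.mem_filter, Finset.mem_univ, true_and, Finset.mem_singleton,
      Equiv.refl_apply, Fin.forall_fin_two]
    fin_cases m <;> by_cases hc : q 0 1 <;> simp_all
  unfold point
  rw [hfil]
  simp

lemma point_single (q : Fin 2 → Fin 2 → Prop) (a : Fin 2) :
    point (Equiv.refl (Fin 2)) q {a} a = a := by
  have hfil : (({a} : Finset (Fin 2)).filter fun m => ∀ j ∈ ({a} : Finset (Fin 2)),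
      j = m ∨ q ((Equiv.refl (Fin 2)) m) ((Equiv.refl (Fin 2)) j)) = {a} := by
    ext m
    simp only [Finset.mem_filter, Finset.mem_singleton]
    constructor
    · rintro ⟨h, -⟩; exact h
    · rintro rfl; exact ⟨rfl, fun j hj => Or.inl hj⟩
  unfold point
  rw [hfil]
  simp

lemma cycleAgents_single (p : Fin 2 → Fin 2 → Fin 2 → Prop) (a : Fin 2) :
    a ∈ cycleAgents (Equiv.refl (Fin 2)) p {a} := by
  rw [cycleAgents, Finset.mem_filter]
  exact ⟨Finset.mem_singleton_self a, 1, one_pos,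
    by simpa using point_single (p a) a⟩

lemma TTCaux_single (p : Fin 2 → Fin 2 → Fin 2 → Prop) (a : Fin 2) :
    TTCaux (Equiv.refl (Fin 2)) p 1 {a} a = a := by
  show TTCaux (Equiv.refl (Fin 2)) p (0 + 1) {a} a = a
  rw [TTCaux, if_pos (cycleAgents_single p a)]
  simpa using point_single (p a) a

lemma TTC_compute (p : Fin 2 → Fin 2 → Fin 2 → Prop)
    (hp : ∀ i, p i 0 1 ↔ ¬ p i 1 0) (i : Fin 2) :
    TTCstrict (Equiv.refl (Fin 2)) p i =
      if p 0 1 0 ∧ p 1 0 1 then (if i = 0 then 1 else 0) else i := by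
  have hpt : ∀ j, point (Equiv.refl (Fin 2)) (p j) Finset.univ j
      = if p j 0 1 then 0 else 1 := fun j => point_univ (p j) (hp j) j
  set g : Fin 2 → Fin 2 := fun j => if p j 0 1 then 0 else 1 with hgdef
  have hg : (fun j => point (Equiv.refl (Fin 2)) (p j) Finset.univ j) = g := funext hpt
  have hcyc : cycleAgents (Equiv.refl (Fin 2)) p Finset.univ
      = Finset.univ.filter fun i => ∃ k, 0 < k ∧ g^[k] i = i := by
    rw [cycleAgents, hg]
  have hTTC : TTCstrict (Equiv.refl (Fin 2)) p i
      = TTCaux (Equiv.refl (Fin 2)) p (1 + 1) Finset.univ i := rfl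
  have hit2 : ∀ j, g^[2] j = g (g j) := fun j => by
    show g^[1 + 1] j = g (g j)
    rw [Function.iterate_succ_apply, Function.iterate_one]
  by_cases hA : p 0 1 0 <;> by_cases hB : p 1 0 1
  · -- trade: g 0 = 1, g 1 = 0
    have hA' : ¬ p 0 0 1 := fun h => (hp 0).mp h hA
    have hg0 : g 0 = 1 := by simp [hgdef, hA']
    have hg1 : g 1 = 0 := by simp [hgdef, hB]
    have hmem : ∀ j : Fin 2, j ∈ cycleAgents (Equiv.refl (Fin 2)) p Finset.univ := by
      intro j
      rw [hcyc, Finset.mem_filter]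
      refine ⟨Finset.mem_univ j, 2, two_pos, ?_⟩
      fin_cases j <;> rw [hit2] <;> simp [hg0, hg1]
    rw [hTTC, TTCaux, if_pos (hmem i), if_pos ⟨hA, hB⟩]
    fin_cases i <;> simp [hpt, hA', hB]
  · -- g 0 = 1, g 1 = 1 : only agent 1 cycles
    have hA' : ¬ p 0 0 1 := fun h => (hp 0).mp h hA
    have hg0 : g 0 = 1 := by simp [hgdef, hA']
    have hg1 : g 1 = 1 := by simp [hgdef, hB]
    have hcycset : cycleAgents (Equiv.refl (Fin 2)) p Finset.univ = {1} := by
      rw [hcyc]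
      ext j
      simp only [Finset.mem_filter, Finset.mem_univ, true_and, Finset.mem_singleton]
      constructor
      · rintro ⟨k, hk, hfix⟩
        fin_cases j
        · exfalso
          have h1 := iterFix g hg0 hg1 k hk
          simp [h1] at hfix
        · rfl
      · rintro rfl
        exact ⟨1, one_pos, by simp [hg1]⟩
    have hcond : ¬ (p 0 1 0 ∧ p 1 0 1) := fun h => hB h.2
    rw [if_neg hcond]
    have h0n : (0 : Fin 2) ∉ cycleAgents (Equiv.refl (Fin 2)) p Finset.univ := by
      rw [hcycset]; decide
    have h1m : (1 : Fin 2) ∈ cycleAgents (Equiv.refl (Fin 2)) p Finset.univ := by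
      rw [hcycset]; decide
    fin_cases i
    · show TTCaux (Equiv.refl (Fin 2)) p (1 + 1) Finset.univ 0 = 0
      rw [TTCaux, if_neg h0n, hcycset,
        show (Finset.univ \ {1} : Finset (Fin 2)) = {0} from by decide]
      exact TTCaux_single p 0
    · show TTCaux (Equiv.refl (Fin 2)) p (1 + 1) Finset.univ 1 = 1
      rw [TTCaux, if_pos h1m]
      simp [hpt, hB]
  · -- g 0 = 0, g 1 = 0 : only agent 0 cycles
    have hA0 : p 0 0 1 := (hp 0).mpr hA
    have hg0 : g 0 = 0 := by simp [hgdef, hA0]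
    have hg1 : g 1 = 0 := by simp [hgdef, hB]
    have hcycset : cycleAgents (Equiv.refl (Fin 2)) p Finset.univ = {0} := by
      rw [hcyc]
      ext j
      simp only [Finset.mem_filter, Finset.mem_univ, true_and, Finset.mem_singleton]
      constructor
      · rintro ⟨k, hk, hfix⟩
        fin_cases j
        · rfl
        · exfalso
          have h1 := iterFix g hg1 hg0 k hk
          simp [h1] at hfix
      · rintro rfl
        exact ⟨1, one_pos, by simp [hg0]⟩
    have hcond : ¬ (p 0 1 0 ∧ p 1 0 1) := fun h => hA h.1
    rw [if_neg hcond]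
    have h0m : (0 : Fin 2) ∈ cycleAgents (Equiv.refl (Fin 2)) p Finset.univ := by
      rw [hcycset]; decide
    have h1n : (1 : Fin 2) ∉ cycleAgents (Equiv.refl (Fin 2)) p Finset.univ := by
      rw [hcycset]; decide
    fin_cases i
    · show TTCaux (Equiv.refl (Fin 2)) p (1 + 1) Finset.univ 0 = 0
      rw [TTCaux, if_pos h0m]
      simp [hpt, hA0]
    · show TTCaux (Equiv.refl (Fin 2)) p (1 + 1) Finset.univ 1 = 1
      rw [TTCaux, if_neg h1n, hcycset,
        show (Finset.univ \ {0} : Finset (Fin 2)) = {1} from by decide]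
      exact TTCaux_single p 1
  · -- g 0 = 0, g 1 = 1 : both fixed
    have hA0 : p 0 0 1 := (hp 0).mpr hA
    have hg0 : g 0 = 0 := by simp [hgdef, hA0]
    have hg1 : g 1 = 1 := by simp [hgdef, hB]
    have hmem : ∀ j : Fin 2, j ∈ cycleAgents (Equiv.refl (Fin 2)) p Finset.univ := by
      intro j
      rw [hcyc, Finset.mem_filter]
      refine ⟨Finset.mem_univ j, 1, one_pos, ?_⟩
      fin_cases j <;> simp [hg0, hg1]
    have hcond : ¬ (p 0 1 0 ∧ p 1 0 1) := fun h => hA h.1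
    rw [if_neg hcond, hTTC, TTCaux, if_pos (hmem i)]
    fin_cases i <;> simp [hpt, hA0, hB]

lemma tb_def (R : WeakOrder (Fin 2)) (lt : Fin 2 → Fin 2 → Prop) (a b : Fin 2) :
    tieBroken (Equiv.refl (Fin 2)) R lt a b ↔ R.P a b ∨ (R.I a b ∧ lt a b) := Iff.rfl

lemma rel_of_dom {R : WeakOrder (Fin 2)} (h : R.I 0 1 ∨ R.P 0 1) : R.rel 0 1 :=
  h.elim And.left And.left

lemma tb10_char {R : WeakOrder (Fin 2)} (hR : R.I 0 1 ∨ R.P 0 1)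
    (lt : Fin 2 → Fin 2 → Prop) :
    tieBroken (Equiv.refl (Fin 2)) R lt 1 0 ↔ R.I 0 1 ∧ lt 1 0 := by
  have h01 := rel_of_dom hR
  rw [tb_def]
  constructor
  · rintro (⟨h1, h2⟩ | ⟨⟨h1, h2⟩, h3⟩)
    · exact absurd h01 h2
    · exact ⟨⟨h2, h1⟩, h3⟩
  · rintro ⟨⟨h1, h2⟩, h3⟩
    exact Or.inr ⟨⟨h2, h1⟩, h3⟩

lemma tb_total {R : WeakOrder (Fin 2)} (hR : R.I 0 1 ∨ R.P 0 1)
    {lt : Fin 2 → Fin 2 → Prop} (hlt : IsTieBreak lt) :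
    tieBroken (Equiv.refl (Fin 2)) R lt 0 1 ↔ ¬ tieBroken (Equiv.refl (Fin 2)) R lt 1 0 := by
  obtain ⟨htot, htr, hirr⟩ := hlt
  rw [tb_def]
  constructor
  · rintro (⟨h1, h2⟩ | ⟨⟨h1, h2⟩, h3⟩) h'
    · exact h2 ((tb10_char hR lt).mp h').1.2
    · exact hirr 0 (htr h3 ((tb10_char hR lt).mp h').2)
  · intro h'
    rcases hR with hI | hP
    · refine Or.inr ⟨hI, ?_⟩
      rcases htot 0 1 (by decide) with h | h
      · exact h
      · exact absurd ((tb10_char (Or.inl hI) lt).mpr ⟨hI, h⟩) h'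
    · exact Or.inl hP

end Aux

/-- with `H = {h₁, h₂}` and the single-block partition, the expanded
domain `𝓡' = {h₁ I h₂, h₁ P h₂}` strictly contains the objective indifferences
domain, yet every `TTC_≻` is group strategy-proof on `𝓡'` in the two-agent market;
hence objective indifferences domains are not maximal (without symmetry) for GSP. -/
theorem objInd_not_maximal_for_GSP :
    ({R : WeakOrder (Fin 2) | ObjInd (fun _ => (0 : Fin 1)) R} ⊂
      {R : WeakOrder (Fin 2) | R.I 0 1 ∨ R.P 0 1}) ∧
    ∀ tb : Fin 2 → Fin 2 → Fin 2 → Prop, (∀ i, IsTieBreak (tb i)) →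
      ∀ R : Fin 2 → WeakOrder (Fin 2), (∀ i, (R i).I 0 1 ∨ (R i).P 0 1) →
        ¬ ∃ (Q : Finset (Fin 2)) (R' : Fin 2 → WeakOrder (Fin 2)),
          (∀ i, (R' i).I 0 1 ∨ (R' i).P 0 1) ∧ (∀ i ∉ Q, R' i = R i) ∧
          (∀ i ∈ Q, (R i).rel (TTCtb (Equiv.refl (Fin 2)) R' tb i)
            (TTCtb (Equiv.refl (Fin 2)) R tb i)) ∧
          ∃ i ∈ Q, (R i).P (TTCtb (Equiv.refl (Fin 2)) R' tb i)
            (TTCtb (Equiv.refl (Fin 2)) R tb i) := by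
  constructor
  · have hsub : {R : WeakOrder (Fin 2) | ObjInd (fun _ => (0 : Fin 1)) R} ⊆
        {R : WeakOrder (Fin 2) | R.I 0 1 ∨ R.P 0 1} :=
      fun R hR => Or.inl ((hR 0 1).mpr rfl)
    rw [Set.ssubset_iff_of_subset hsub]
    refine ⟨⟨fun a b => a = 0 ∨ b = 1, by decide, by decide⟩,
      Or.inr ⟨Or.inl rfl, by decide⟩, fun h => ?_⟩
    have h10 := ((h 0 1).mpr rfl).2
    rcases h10 with h10 | h10 <;> exact absurd h10 (by decide)
  · rintro tb htb R hR ⟨Q, R', hdom', hnotQ, hweak, i, hiQ, hgain⟩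
    have hxp : ∀ a : Fin 2, tieBroken (Equiv.refl (Fin 2)) (R a) (tb a) 0 1 ↔
        ¬ tieBroken (Equiv.refl (Fin 2)) (R a) (tb a) 1 0 :=
      fun a => tb_total (hR a) (htb a)
    have hxp' : ∀ a : Fin 2, tieBroken (Equiv.refl (Fin 2)) (R' a) (tb a) 0 1 ↔
        ¬ tieBroken (Equiv.refl (Fin 2)) (R' a) (tb a) 1 0 :=
      fun a => tb_total (hdom' a) (htb a)
    have hx : ∀ j, TTCtb (Equiv.refl (Fin 2)) R tb j =
        if tieBroken (Equiv.refl (Fin 2)) (R 0) (tb 0) 1 0 ∧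
           tieBroken (Equiv.refl (Fin 2)) (R 1) (tb 1) 0 1
        then (if j = 0 then 1 else 0) else j :=
      fun j => TTC_compute _ hxp j
    have hx' : ∀ j, TTCtb (Equiv.refl (Fin 2)) R' tb j =
        if tieBroken (Equiv.refl (Fin 2)) (R' 0) (tb 0) 1 0 ∧
           tieBroken (Equiv.refl (Fin 2)) (R' 1) (tb 1) 0 1
        then (if j = 0 then 1 else 0) else j :=
      fun j => TTC_compute _ hxp' j
    have hg1char := tb10_char (hR 0) (tb 0)
    have hg1char' := tb10_char (hdom' 0) (tb 0)
    have hrel01 : ∀ a : Fin 2, (R a).rel 0 1 := fun a => rel_of_dom (hR a)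
    rw [hx' i, hx i] at hgain
    have hi2 : i = 0 ∨ i = 1 := by omega
    by_cases hC : tieBroken (Equiv.refl (Fin 2)) (R 0) (tb 0) 1 0 ∧
        tieBroken (Equiv.refl (Fin 2)) (R 1) (tb 1) 0 1 <;>
      by_cases hC' : tieBroken (Equiv.refl (Fin 2)) (R' 0) (tb 0) 1 0 ∧
        tieBroken (Equiv.refl (Fin 2)) (R' 1) (tb 1) 0 1 <;>
      rcases hi2 with rfl | rfl
    · -- c, c', i = 0 : P 1 1
      rw [if_pos hC, if_pos hC', if_pos rfl] at hgain
      exact hgain.2 hgain.1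
    · -- c, c', i = 1 : P 0 0
      rw [if_pos hC, if_pos hC', if_neg (by decide : ¬ (1 : Fin 2) = 0)] at hgain
      exact hgain.2 hgain.1
    · -- c, ¬c', i = 0 : P 0 1 with true pref strict, but c needs (R 0).I
      rw [if_pos hC, if_neg hC', if_pos rfl] at hgain
      exact hgain.2 (hg1char.mp hC.1).1.2
    · -- c, ¬c', i = 1 : P 1 0
      rw [if_pos hC, if_neg hC', if_neg (by decide : ¬ (1 : Fin 2) = 0)] at hgain
      exact hgain.2 (hrel01 1)
    · -- ¬c, c', i = 0 : P 1 0
      rw [if_neg hC, if_pos hC', if_pos rfl] at hgain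
      exact hgain.2 (hrel01 0)
    · -- ¬c, c', i = 1 : the real manipulation case
      rw [if_neg hC, if_pos hC', if_neg (by decide : ¬ (1 : Fin 2) = 0)] at hgain
      have hp101 : tieBroken (Equiv.refl (Fin 2)) (R 1) (tb 1) 0 1 := Or.inl hgain
      obtain ⟨hI', htb10⟩ := hg1char'.mp hC'.1
      by_cases h0Q : (0 : Fin 2) ∈ Q
      · have hw := hweak 0 h0Q
        rw [hx' 0, hx 0, if_pos hC', if_neg hC, if_pos rfl] at hw
        rcases hR 0 with hI | hP
        · exact hC ⟨hg1char.mpr ⟨hI, htb10⟩, hp101⟩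
        · exact hP.2 hw
      · have heq := hnotQ 0 h0Q
        rw [heq] at hC'
        exact hC ⟨hC'.1, hp101⟩
    · -- ¬c, ¬c', i = 0 : P 0 0
      rw [if_neg hC, if_neg hC'] at hgain
      exact hgain.2 hgain.1
    · -- ¬c, ¬c', i = 1 : P 1 1
      rw [if_neg hC, if_neg hC'] at hgain
      exact hgain.2 hgain.1


end ShapleyScarf
end

section
/- In the three-agent market with strict/indifferent preferences R_1: w_2 I w_3 P w_1, R_2 = R_3: w_1 P w_2 P w_3, and tie-breaking profile where every agent's order is 1 ≻ 2 ≻ 3, TTC_≻(R) = (w_2, w_1, w_3). If agent 1 misreports R'_1: w_3 P w_2 P w_1, then TTC_≻(R'_1, R_2, R_3) = (w_3, w_2, w_1). Agent 1 is indifferent between his two assignments (w_2 I_1 w_3) while agent 3 strictly improves (w_1 P_3 w_3), so coalition {1,3} has a profitable group manipulation and TTC_≻ is not group strategy-proof under general indifferences. -/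
open scoped Classical

namespace ShapleyScarf

/-! In the truthful tie-broken profile agent 1 breaks the tie `w₂ I w₃` in favour of agent 2
and points at 2, while 2 and 3 point at 1: the first round trades along `1 ↔ 2`, and agent 3,
pointing into that cycle, keeps `w₃`. After the misreport agent 1 points at 3 instead, so the
cycle is `1 ↔ 3` and agent 2 keeps `w₂`. Agents (and houses) `1, 2, 3` are `0, 1, 2` in Lean. -/

namespace WeakOrder
variable {H : Type*} {R : WeakOrder H} {a b c : H}

theorem I.symm (h : R.I a b) : R.I b a := ⟨h.2, h.1⟩

theorem P.trans (hab : R.P a b) (hbc : R.P b c) : R.P a c :=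
  ⟨R.trans _ _ _ hab.1 hbc.1, fun hca => hab.2 (R.trans _ _ _ hbc.1 hca)⟩

theorem P.ne (h : R.P a b) : a ≠ b := by
  rintro rfl
  exact h.2 h.1

end WeakOrder

section TTC
variable {n : ℕ} {H : Type*}

theorem tieBroken_asymm (w : Fin n ≃ H) (R : WeakOrder H) {lt : Fin n → Fin n → Prop}
    (hlt : ∀ a b, lt a b → ¬ lt b a) {a b : H} (hab : tieBroken w R lt a b) :
    ¬ tieBroken w R lt b a := by
  rintro (hba | ⟨hba, hlt_ba⟩)
  · rcases hab with hab | hab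
    · exact hab.2 hba.1
    · exact hba.2 hab.1.1
  · rcases hab with hab | ⟨-, hlt_ab⟩
    · exact hab.2 hba.1
    · exact hlt _ _ hlt_ab hlt_ba

theorem point_eq_of_top (w : Fin n ≃ H) {pref : H → H → Prop}
    (hasymm : ∀ a b, pref a b → ¬ pref b a) {S : Finset (Fin n)} (i : Fin n) {b : Fin n}
    (hb : b ∈ S) (htop : ∀ j ∈ S, j ≠ b → pref (w b) (w j)) :
    point w pref S i = b := by
  have htops : (S.filter fun m => ∀ j ∈ S, j = m ∨ pref (w m) (w j)) = {b} := by
    ext m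
    simp only [Finset.mem_filter, Finset.mem_singleton]
    constructor
    · rintro ⟨hm, hm_top⟩
      by_contra hmb
      have hmb' : pref (w m) (w b) := (hm_top b hb).resolve_left (Ne.symm hmb)
      exact hasymm _ _ hmb' (htop m hm hmb)
    · rintro rfl
      exact ⟨hb, fun j hj => or_iff_not_imp_left.2 (htop j hj)⟩
  simp [point, htops]

theorem point_singleton (w : Fin n ≃ H) (pref : H → H → Prop) (i : Fin n) :
    point w pref {i} i = i := by
  unfold point
  split
  · exact Finset.mem_singleton.1 (Finset.mem_filter.1 (Finset.min'_mem _ _)).1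
  · rfl

theorem cycleAgents_singleton (w : Fin n ≃ H) (pref : Fin n → H → H → Prop) (i : Fin n) :
    cycleAgents w pref {i} = {i} := by
  ext m
  simp only [cycleAgents, Finset.mem_filter, Finset.mem_singleton, and_iff_left_iff_imp]
  rintro rfl
  exact ⟨1, one_pos, point_singleton w _ m⟩

theorem not_mem_cycleAgents_of_mapsTo (w : Fin n ≃ H) (pref : Fin n → H → H → Prop)
    {S : Finset (Fin n)} {C : Set (Fin n)} {i : Fin n}
    (hC : Set.MapsTo (fun j => point w (pref j) S j) C C)
    (hi : point w (pref i) S i ∈ C) (hiC : i ∉ C) :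
    i ∉ cycleAgents w pref S := by
  simp only [cycleAgents, Finset.mem_filter, not_and, not_exists]
  rintro - (_ | k) hk hcycle
  · exact absurd hk (lt_irrefl 0)
  · rw [Function.iterate_succ_apply] at hcycle
    exact hiC (hcycle ▸ hC.iterate k hi)

theorem TTCstrict_eq_swap (w : Fin 3 ≃ H) (pref : Fin 3 → H → H → Prop) {a b c : Fin 3}
    (hab : a ≠ b) (hac : a ≠ c) (hbc : b ≠ c)
    (ha : point w (pref a) Finset.univ a = b) (hb : point w (pref b) Finset.univ b = a)
    (hc : point w (pref c) Finset.univ c = a) :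
    TTCstrict w pref = w ∘ Equiv.swap a b := by
  have hcover : ∀ i, i = a ∨ i = b ∨ i = c := by omega
  have mem_of_two_cycle : ∀ {x y}, point w (pref x) Finset.univ x = y →
      point w (pref y) Finset.univ y = x → x ∈ cycleAgents w pref Finset.univ :=
    fun hxy hyx => Finset.mem_filter.2 ⟨Finset.mem_univ _, 2, two_pos, by
      show point w (pref (point w (pref _) _ _)) _ (point w (pref _) _ _) = _
      rw [hxy, hyx]⟩
  have hc_tail : c ∉ cycleAgents w pref Finset.univ := by
    refine not_mem_cycleAgents_of_mapsTo w pref (C := {a, b}) ?_ (by simp [hc])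
      (by simp [hac.symm, hbc.symm])
    rintro x (rfl | rfl) <;> simp [ha, hb]
  have hcycle : cycleAgents w pref Finset.univ = {a, b} := by
    ext i
    rcases hcover i with rfl | rfl | rfl
    · simp [mem_of_two_cycle ha hb]
    · simp [mem_of_two_cycle hb ha]
    · simp [hc_tail, hac.symm, hbc.symm]
  have hrest : Finset.univ \ {a, b} = {c} := by
    ext i
    rcases hcover i with rfl | rfl | rfl <;> simp [hab, hac, hbc, hab.symm, hac.symm, hbc.symm]
  funext i
  show TTCaux w pref (2 + 1) Finset.univ i = _
  rw [TTCaux, hcycle, hrest]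
  rcases hcover i with rfl | rfl | rfl
  · simp [ha]
  · simp [hb, hab.symm]
  · rw [if_neg (by simp [hac.symm, hbc.symm])]
    show TTCaux w pref (1 + 1) {i} i = _
    rw [TTCaux, cycleAgents_singleton, if_pos (Finset.mem_singleton_self i), point_singleton]
    simp [Equiv.swap_apply_of_ne_of_ne hac.symm hbc.symm]

theorem point_univ_eq_of_P_chain (w : Fin 3 ≃ H) (R : WeakOrder H)
    {lt : Fin 3 → Fin 3 → Prop} (hlt : ∀ a b, lt a b → ¬ lt b a) {a b c : Fin 3}
    (hab : R.P (w a) (w b)) (hbc : R.P (w b) (w c)) (i : Fin 3) :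
    point w (tieBroken w R lt) Finset.univ i = a := by
  have hab' : a ≠ b := fun h => hab.ne (congrArg w h)
  have hac' : a ≠ c := fun h => (hab.trans hbc).ne (congrArg w h)
  have hbc' : b ≠ c := fun h => hbc.ne (congrArg w h)
  refine point_eq_of_top w (fun _ _ => tieBroken_asymm w R hlt) i (Finset.mem_univ a)
    fun j _ hja => ?_
  obtain rfl | rfl : j = b ∨ j = c := by omega
  · exact Or.inl hab
  · exact Or.inl (hab.trans hbc)

end TTC

/-- three-agent failure of group strategy-proofness under general
indifferences. Truthful play gives `(w₂, w₁, w₃)`; if agent 1 misreports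
`w₃ P w₂ P w₁` the outcome is `(w₃, w₂, w₁)`: agent 1 is indifferent while agent 3
strictly improves, so coalition `{1,3}` profitably manipulates. -/
theorem TTCtb_not_GSP_example (R R' : Fin 3 → WeakOrder (Fin 3))
    (h10 : (R 0).I 1 2) (h11 : (R 0).P 1 0)
    (h20 : (R 1).P 0 1) (h21 : (R 1).P 1 2)
    (h30 : (R 2).P 0 1) (h31 : (R 2).P 1 2)
    (h10' : (R' 0).P 2 1) (h11' : (R' 0).P 1 0)
    (hR'1 : R' 1 = R 1) (hR'2 : R' 2 = R 2) :
    TTCtb (Equiv.refl (Fin 3)) R (fun _ a b => a < b) = ![1, 0, 2] ∧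
    TTCtb (Equiv.refl (Fin 3)) R' (fun _ a b => a < b) = ![2, 1, 0] ∧
    (R 0).I 2 1 ∧ (R 2).P 0 2 := by
  have hlt : ∀ a b : Fin 3, a < b → ¬ b < a := fun _ _ => lt_asymm
  have hpoint_chain (W : WeakOrder (Fin 3)) (h01 : W.P 0 1) (h12 : W.P 1 2) (i : Fin 3) :
      point (Equiv.refl _) (tieBroken (Equiv.refl _) W (· < ·)) Finset.univ i = 0 :=
    point_univ_eq_of_P_chain _ W hlt h01 h12 i
  have htruthful : point (Equiv.refl _) (tieBroken (Equiv.refl _) (R 0) (· < ·))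
      Finset.univ 0 = 1 := by
    refine point_eq_of_top _ (fun _ _ => tieBroken_asymm _ _ hlt) 0 (Finset.mem_univ 1)
      fun j _ hj => ?_
    fin_cases j
    · exact Or.inl h11
    · exact absurd rfl hj
    · exact Or.inr ⟨h10, by decide⟩
  have hmisreport : point (Equiv.refl _) (tieBroken (Equiv.refl _) (R' 0) (· < ·))
      Finset.univ 0 = 2 :=
    point_univ_eq_of_P_chain _ _ hlt h10' h11' 0
  refine ⟨?_, ?_, h10.symm, h30.trans h31⟩
  · refine (TTCstrict_eq_swap _ (fun i => tieBroken _ (R i) (· < ·)) (a := 0) (b := 1) (c := 2)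
      (by decide) (by decide) (by decide) htruthful
      (hpoint_chain _ h20 h21 1) (hpoint_chain _ h30 h31 2)).trans ?_
    funext i; fin_cases i <;> rfl
  · refine (TTCstrict_eq_swap _ (fun i => tieBroken _ (R' i) (· < ·)) (a := 0) (b := 2) (c := 1)
      (by decide) (by decide) (by decide) hmisreport
      (hR'2 ▸ hpoint_chain _ h30 h31 2) (hR'1 ▸ hpoint_chain _ h20 h21 1)).trans ?_
    funext i; fin_cases i <;> rfl

end ShapleyScarf
end
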